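/- arXiv:1411.1463 — 4 statements merged into one kernel-verified Lean document; each statement's English description precedes it below -/
import Mathlib

section
/- For a uniformly random total order of the interval [1,n] (equivalently a uniformly random permutation), for each n ≥ 1 the probability that both the interval [2^n, 2^{n+1}) contains exactly one absolute record and the interval (-2^{n+1}, -2^n] contains none (records defined with respect to examining integers in the order 0, 1, -1, 2, -2, ...) is at least 1/8. Concretely: ∏_{j=2^n}^{2^{n+1}-1} (1 - 1/(2j))(1 - 1/(2j+1)) · ∑_{i=2^n}^{2^{n+1}-1} (1/(2i))/(1 - 1/(2i)) ≥ 1/8. -/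
private lemma tele_prod (a : ℕ) (ha : 1 ≤ a) :
    ∀ b : ℕ, a ≤ b →
      ∏ j ∈ Finset.Icc a b, ((2 * (j : ℝ) - 1) / (2 * (j : ℝ) + 1))
        = (2 * (a : ℝ) - 1) / (2 * (b : ℝ) + 1) := by
  intro b hb
  induction b, hb using Nat.le_induction with
  | base => simp
  | succ b hb ih =>
      rw [Finset.prod_Icc_succ_top (by omega), ih]
      have h1 : (2 * (b : ℝ) + 1) ≠ 0 := by positivity
      have h2 : (2 * ((b : ℝ) + 1) + 1) ≠ 0 := by positivity
      push_cast
      field_simp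
      ring

/-- the probability that `[2^n, 2^{n+1})` contains exactly one
absolute record while `(-2^{n+1}, -2^n]` contains none (records examined in
the order `0, 1, -1, 2, -2, …`, the `j`-th examined integer being a record
independently with probability `1/j`) is at least `1/8`; concretely,
`∏_{j=2^n}^{2^{n+1}-1} (1 - 1/(2j))(1 - 1/(2j+1)) ·
 ∑_{i=2^n}^{2^{n+1}-1} (1/(2i))/(1 - 1/(2i)) ≥ 1/8`. -/
theorem record_block_inequality (n : ℕ) (hn : 1 ≤ n) :
    (∏ j ∈ Finset.Icc (2 ^ n : ℕ) (2 ^ (n + 1) - 1),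
        (1 - 1 / (2 * (j : ℝ))) * (1 - 1 / (2 * (j : ℝ) + 1))) *
      (∑ i ∈ Finset.Icc (2 ^ n : ℕ) (2 ^ (n + 1) - 1),
        (1 / (2 * (i : ℝ))) / (1 - 1 / (2 * (i : ℝ)))) ≥ 1 / 8 := by
  set N : ℕ := 2 ^ n with hN
  have hN2 : 2 ≤ N := by
    have := Nat.one_lt_two_pow_iff.mpr (by omega : n ≠ 0)
    omega
  have hb : 2 ^ (n + 1) - 1 = 2 * N - 1 := by
    rw [pow_succ]; ring_nf; rw [hN]
  have hbge : N ≤ 2 * N - 1 := by omega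
  have hcast : ((2 * N - 1 : ℕ) : ℝ) = 2 * (N : ℝ) - 1 := by
    push_cast [Nat.cast_sub (by omega : 1 ≤ 2 * N)]; ring
  have ha : (2 : ℝ) ≤ (N : ℝ) := by exact_mod_cast hN2
  -- product
  have hprod : (∏ j ∈ Finset.Icc N (2 * N - 1),
      (1 - 1 / (2 * (j : ℝ))) * (1 - 1 / (2 * (j : ℝ) + 1)))
      = (2 * (N : ℝ) - 1) / (4 * (N : ℝ) - 1) := by
    have := tele_prod N (by omega) (2 * N - 1) hbge
    rw [hcast] at this
    rw [show (4 * (N : ℝ) - 1) = 2 * (2 * (N : ℝ) - 1) + 1 from by ring, ← this]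
    apply Finset.prod_congr rfl
    intro j hj
    have hj1 : 1 ≤ j := le_trans (by omega) (Finset.mem_Icc.mp hj).1
    have hjR : (1 : ℝ) ≤ (j : ℝ) := by exact_mod_cast hj1
    have h1 : (2 * (j : ℝ)) ≠ 0 := by positivity
    have h2 : (2 * (j : ℝ) + 1) ≠ 0 := by positivity
    field_simp
    ring
  have hsum : (N : ℝ) * (1 / (4 * (N : ℝ) - 3)) ≤
      ∑ i ∈ Finset.Icc N (2 * N - 1),
        (1 / (2 * (i : ℝ))) / (1 - 1 / (2 * (i : ℝ))) := by
    have hcard : (Finset.Icc N (2 * N - 1)).card = N := by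
      rw [Nat.card_Icc]; omega
    calc (N : ℝ) * (1 / (4 * (N : ℝ) - 3))
        = (Finset.Icc N (2 * N - 1)).card • (1 / (4 * (N : ℝ) - 3)) := by
          rw [hcard]; simp
      _ ≤ _ := by
          apply Finset.card_nsmul_le_sum
          intro i hi
          obtain ⟨hi1, hi2⟩ := Finset.mem_Icc.mp hi
          have hiN : (N : ℝ) ≤ (i : ℝ) := by exact_mod_cast hi1
          have hi2' : (i : ℝ) ≤ 2 * (N : ℝ) - 1 := by
            have : (i : ℝ) ≤ ((2 * N - 1 : ℕ) : ℝ) := by exact_mod_cast hi2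
            rwa [hcast] at this
          have hipos : (2 : ℝ) ≤ (i : ℝ) := le_trans ha hiN
          have h1 : (0 : ℝ) < 2 * (i : ℝ) := by linarith
          have heq : (1 / (2 * (i : ℝ))) / (1 - 1 / (2 * (i : ℝ)))
              = 1 / (2 * (i : ℝ) - 1) := by
            have h2 : (2 * (i : ℝ) - 1) ≠ 0 := by linarith
            have h3 : (1 : ℝ) - 1 / (2 * (i : ℝ)) ≠ 0 := by
              rw [sub_ne_zero]
              intro h
              have := h.symm
              rw [div_eq_one_iff_eq (by linarith)] at this
              linarith
            field_simp
          rw [heq]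
          apply one_div_le_one_div_of_le (by linarith)
          linarith
  rw [hb, hprod]
  have hpos1 : (0 : ℝ) < 4 * (N : ℝ) - 1 := by linarith
  have hpos2 : (0 : ℝ) < 4 * (N : ℝ) - 3 := by linarith
  have hpos3 : (0 : ℝ) < 2 * (N : ℝ) - 1 := by linarith
  have hfinal : (1 : ℝ) / 8 ≤ (2 * (N : ℝ) - 1) / (4 * (N : ℝ) - 1)
      * ((N : ℝ) * (1 / (4 * (N : ℝ) - 3))) := by
    have h3 : (2 * (N : ℝ) - 1) / (4 * (N : ℝ) - 1) * ((N : ℝ) * (1 / (4 * (N : ℝ) - 3)))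
        = ((2 * (N : ℝ) - 1) * (N : ℝ)) / ((4 * (N : ℝ) - 1) * (4 * (N : ℝ) - 3)) := by
      field_simp
    rw [h3, div_le_div_iff₀ (by norm_num) (by positivity)]
    nlinarith
  calc (1 : ℝ) / 8 ≤ _ := hfinal
    _ ≤ _ := by
        apply mul_le_mul_of_nonneg_left hsum
        positivity
end

section
/- Fix w > 0 and let p_{n,k} denote the probability that position k is a founder of the weighted-insertion order on [1,n] with weight w. Then p_{n,k} satisfies p_{n,1} = p_{n,n} = 1, the symmetry p_{n,n+1-k} = p_{n,k}, and the recurrence p_{n+1,k} = [(w+k-2) p_{n,k-1} + (w+n-k) p_{n,k}]/(2w+n-1) for 2 ≤ k ≤ n. Moreover p_{n,k} is unimodal in k: p_{n,k} ≥ p_{n,k+1} for all k < n/2. -/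
open scoped Classical

/-- The founders of a total order on positions `0,…,l.length-1`, where the
list entry `l[i]` is the arrival rank of position `i` (smaller = earlier in
the order): position `i` is a founder if it is order-below everything to its
left, or order-below everything to its right. -/
noncomputable def founders (l : List ℕ) : Finset ℕ :=
  (Finset.range l.length).filter fun i =>
    (∀ j < i, l.getD i 0 < l.getD j 0) ∨
    (∀ j < l.length, i < j → l.getD i 0 < l.getD j 0)

/-- All total orders of `[1,n]`, encoded as permutation lists of `{0,…,n-1}`:
entry `l[i]` is the arrival rank of position `i`. -/
noncomputable def perms (n : ℕ) : Finset (List ℕ) :=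
  (List.range n).permutations.toFinset

/-- The probability mass function of the weighted-insertion order with weight
`w` on `n` positions: elements `0,1,…,n-1` are inserted one by one in order of
arrival rank, element `k` being inserted (as the current order-maximum) at one
of the `k+1` gaps, the two endpoint gaps having weight `w` and interior gaps
weight `1`.  The mass of a list is computed by peeling off the last arrival. -/
noncomputable def wiP (w : ℝ) : ℕ → List ℕ → ℝ
  | 0, l => if l = [] then 1 else 0
  | 1, l => if l = [0] then 1 else 0
  | (n + 2), l =>
      ((if l.idxOf (n + 1) = 0 ∨ l.idxOf (n + 1) = l.length - 1 then w else 1) /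
          (2 * w + n)) * wiP w (n + 1) (l.erase (n + 1))

/-- `pFound w n k` : the probability that position `k` (1-based, `1 ≤ k ≤ n`)
is a founder of the weighted-insertion order with weight `w` on `[1,n]`. -/
noncomputable def pFound (w : ℝ) (n k : ℕ) : ℝ :=
  ∑ l ∈ perms n, if k - 1 ∈ founders l then wiP w n l else 0

/-- `sFound w n` : the expected number of founders of the weighted-insertion
order with weight `w` on `[1,n]`. -/
noncomputable def sFound (w : ℝ) (n : ℕ) : ℝ :=
  ∑ l ∈ perms n, ((founders l).card : ℝ) * wiP w n l

/-- The restriction of the total order encoded by `l` to the block of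
positions `off, off+1, …, off + s.length - 1` coincides with the total order
encoded by `s`. -/
def restrEq (l : List ℕ) (off : ℕ) (s : List ℕ) : Prop :=
  ∀ i < s.length, ∀ j < s.length,
    (l.getD (off + i) 0 < l.getD (off + j) 0 ↔ s.getD i 0 < s.getD j 0)
lemma mem_perms {n : ℕ} {l : List ℕ} : l ∈ perms n ↔ l.Perm (List.range n) := by
  simp [perms, List.mem_permutations]

lemma perms_length {n : ℕ} {l : List ℕ} (h : l ∈ perms n) : l.length = n := by
  simpa using (mem_perms.1 h).length_eq

lemma perms_nodup {n : ℕ} {l : List ℕ} (h : l ∈ perms n) : l.Nodup :=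
  (mem_perms.1 h).nodup_iff.2 List.nodup_range

lemma perms_mem_iff {n : ℕ} {l : List ℕ} (h : l ∈ perms n) {x : ℕ} : x ∈ l ↔ x < n := by
  rw [(mem_perms.1 h).mem_iff, List.mem_range]

lemma insertIdx_eq (x : ℕ) : ∀ (j : ℕ) (l : List ℕ), j ≤ l.length →
    l.insertIdx j x = l.take j ++ x :: l.drop j
  | 0, l, _ => rfl
  | (j+1), [], h => by simp at h
  | (j+1), a :: l, h => by
      simp only [List.insertIdx_succ_cons, List.take_succ_cons, List.drop_succ_cons,
        List.cons_append]
      rw [insertIdx_eq x j l (by simpa using h)]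

lemma erase_insertIdx {x : ℕ} {l : List ℕ} (hx : x ∉ l) {j : ℕ} (hj : j ≤ l.length) :
    (l.insertIdx j x).erase x = l := by
  rw [insertIdx_eq x j l hj, List.erase_append_right _ (fun h => hx (List.mem_of_mem_take h)),
    List.erase_cons_head, List.take_append_drop]

lemma indexOf_insertIdx {x : ℕ} {l : List ℕ} (hx : x ∉ l) {j : ℕ} (hj : j ≤ l.length) :
    (l.insertIdx j x).idxOf x = j := by
  rw [insertIdx_eq x j l hj,
    List.idxOf_append_of_notMem (fun h => hx (List.mem_of_mem_take h))]
  simp [hj]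

lemma perm_insertIdx (x : ℕ) (l : List ℕ) {j : ℕ} (hj : j ≤ l.length) :
    (l.insertIdx j x).Perm (x :: l) := by
  rw [insertIdx_eq x j l hj]
  calc (l.take j ++ x :: l.drop j).Perm (x :: (l.take j ++ l.drop j)) := List.perm_middle
    _ = x :: l := by rw [List.take_append_drop]

lemma insertIdx_indexOf_erase {x : ℕ} {l : List ℕ} (hx : x ∈ l) (hnd : l.Nodup) :
    (l.erase x).insertIdx (l.idxOf x) x = l := by
  set i := l.idxOf x with hi
  have hil : i < l.length := List.idxOf_lt_length_iff.2 hx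
  have hget : l[i]'hil = x := List.getElem_idxOf hil
  have hxt : x ∉ l.take i := by
    intro h
    obtain ⟨p, hp, hpe⟩ := List.mem_iff_getElem.1 h
    have hp' : p < i := by simpa using hp.trans_le (by simp)
    rw [List.getElem_take] at hpe
    have hpl : p < l.length := by omega
    have : l[p]'hpl = l[i]'hil := by rw [hpe, hget]
    have := (List.Nodup.getElem_inj_iff hnd).1 this
    omega
  have hdrop : l.drop i = x :: l.drop (i+1) := by
    rw [List.drop_eq_getElem_cons hil, hget]
  have herase : l.erase x = l.take i ++ l.drop (i+1) := by
    conv_lhs => rw [← List.take_append_drop i l, hdrop]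
    rw [List.erase_append_right _ hxt, List.erase_cons_head]
  have hlen : i ≤ (l.erase x).length := by
    rw [List.length_erase_of_mem hx]; omega
  rw [herase, insertIdx_eq x _ _ (by rwa [herase] at hlen)]
  have htake : (l.take i ++ l.drop (i+1)).take i = l.take i := by
    rw [List.take_append, List.take_take, min_self, List.length_take]
    simp [Nat.min_eq_left hil.le]
  have hdrop2 : (l.take i ++ l.drop (i+1)).drop i = l.drop (i+1) := by
    rw [List.drop_append, List.length_take, Nat.min_eq_left hil.le]
    simp
  rw [htake, hdrop2, ← hdrop, List.take_append_drop]

lemma range_succ_perm (n : ℕ) : (List.range (n+1)).Perm (n :: List.range n) := by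
  rw [List.range_succ]
  simpa using (List.perm_middle (a := n) (l₁ := List.range n) (l₂ := []))

lemma insertIdx_mem_perms {n : ℕ} {s : List ℕ} (hs : s ∈ perms n) {j : ℕ} (hj : j < n + 1) :
    s.insertIdx j n ∈ perms (n+1) := by
  rw [mem_perms]
  have hlen : j ≤ s.length := by rw [perms_length hs]; omega
  exact (perm_insertIdx n s hlen).trans
    (((mem_perms.1 hs).cons n).trans (range_succ_perm n).symm)

lemma sum_perms_succ (n : ℕ) (f : List ℕ → ℝ) :
    ∑ l ∈ perms (n+1), f l
      = ∑ s ∈ perms n, ∑ j ∈ Finset.range (n+1), f (s.insertIdx j n) := by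
  rw [← Finset.sum_product']
  refine Finset.sum_nbij' (fun l => (l.erase n, l.idxOf n))
    (fun p => p.1.insertIdx p.2 n) ?_ ?_ ?_ ?_ ?_
  · intro l hl
    have hperm := mem_perms.1 hl
    have hmem : n ∈ l := (perms_mem_iff hl).2 (by omega)
    refine Finset.mem_product.2 ⟨?_, ?_⟩
    · rw [mem_perms]
      have : (List.range (n+1)).erase n = List.range n := by
        rw [List.range_succ, List.erase_append_right _ (by simp), List.erase_cons_head,
          List.append_nil]
      rw [← this]
      exact hperm.erase n
    · rw [Finset.mem_range, ← perms_length hl]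
      exact List.idxOf_lt_length_iff.2 hmem
  · intro p hp
    obtain ⟨h1, h2⟩ := Finset.mem_product.1 hp
    exact insertIdx_mem_perms h1 (Finset.mem_range.1 h2)
  · intro l hl
    have hmem : n ∈ l := (perms_mem_iff hl).2 (by omega)
    exact insertIdx_indexOf_erase hmem (perms_nodup hl)
  · intro p hp
    obtain ⟨h1, h2⟩ := Finset.mem_product.1 hp
    have hnm : n ∉ p.1 := fun h => by
      have := (perms_mem_iff h1).1 h; omega
    have hlen : p.2 ≤ p.1.length := by
      rw [perms_length h1]; exact Nat.lt_succ_iff.1 (Finset.mem_range.1 h2)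
    rw [Prod.ext_iff]
    exact ⟨erase_insertIdx hnm hlen, indexOf_insertIdx hnm hlen⟩
  · intro l hl
    have hmem : n ∈ l := (perms_mem_iff hl).2 (by omega)
    exact (congrArg f (insertIdx_indexOf_erase hmem (perms_nodup hl))).symm

lemma wiP_insertIdx (w : ℝ) (M : ℕ) {s : List ℕ} (hs : s ∈ perms (M+1)) {j : ℕ}
    (hj : j < M + 2) :
    wiP w (M+2) (s.insertIdx j (M+1))
      = (if j = 0 ∨ j = M+1 then w else 1) / (2*w + M) * wiP w (M+1) s := by
  have hnm : (M+1) ∉ s := fun h => by have := (perms_mem_iff hs).1 h; omega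
  have hlen : j ≤ s.length := by rw [perms_length hs]; omega
  have hlen2 : (s.insertIdx j (M+1)).length = M + 2 := by
    rw [List.length_insertIdx_of_le_length hlen, perms_length hs]
  show (if (s.insertIdx j (M+1)).idxOf (M+1) = 0 ∨
      (s.insertIdx j (M+1)).idxOf (M+1) = (s.insertIdx j (M+1)).length - 1 then w else 1) /
      (2*w + M) * wiP w (M+1) ((s.insertIdx j (M+1)).erase (M+1)) = _
  rw [indexOf_insertIdx hnm hlen, erase_insertIdx hnm hlen, hlen2]
  norm_num

lemma wiP_nonneg {w : ℝ} (hw : 0 < w) : ∀ (n : ℕ) (l : List ℕ), 0 ≤ wiP w n l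
  | 0, l => by rw [wiP]; positivity
  | 1, l => by rw [wiP]; positivity
  | (n+2), l => by
      rw [wiP]
      have h1 : 0 ≤ wiP w (n+1) (l.erase (n+1)) := wiP_nonneg hw (n+1) _
      have h2 : (0:ℝ) ≤ (if l.idxOf (n+1) = 0 ∨ l.idxOf (n+1) = l.length - 1 then w else 1) := by
        split <;> linarith
      have h3 : (0:ℝ) < 2*w + n := by positivity
      positivity

lemma weight_sum (w : ℝ) (M q : ℕ) (hq : 1 ≤ q) (hqM : q ≤ M + 1) :
    ∑ j ∈ Finset.range q, (if j = 0 ∨ j = M+1 then w else 1) = w + q - 1 := by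
  have : ∀ j ∈ Finset.range q, (if j = 0 ∨ j = M+1 then w else 1)
      = 1 + (if j = 0 then w - 1 else 0) + (if j = M+1 then w - 1 else 0) := by
    intro j hj
    rcases eq_or_ne j 0 with rfl | h0
    · rw [if_pos (Or.inl rfl), if_pos rfl, if_neg (by omega)]; ring
    · rcases eq_or_ne j (M+1) with rfl | h1
      · rw [if_pos (Or.inr rfl), if_neg h0, if_pos rfl]; ring
      · rw [if_neg (by tauto), if_neg h0, if_neg h1]; ring
  rw [Finset.sum_congr rfl this]
  rw [Finset.sum_add_distrib, Finset.sum_add_distrib, Finset.sum_const,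
    Finset.sum_ite_eq' (Finset.range q) 0 (fun _ => w - 1),
    Finset.sum_ite_eq' (Finset.range q) (M+1) (fun _ => w - 1)]
  simp only [Finset.mem_range, Finset.card_range, nsmul_eq_mul, mul_one]
  rw [if_pos (by omega), if_neg (by omega)]
  ring

lemma weight_sum_total (w : ℝ) (M : ℕ) :
    ∑ j ∈ Finset.range (M+2), (if j = 0 ∨ j = M+1 then w else 1) = 2*w + M := by
  have : ∀ j ∈ Finset.range (M+2), (if j = 0 ∨ j = M+1 then w else 1)
      = 1 + (if j = 0 then w - 1 else 0) + (if j = M+1 then w - 1 else 0) := by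
    intro j hj
    rcases eq_or_ne j 0 with rfl | h0
    · rw [if_pos (Or.inl rfl), if_pos rfl, if_neg (by omega)]; ring
    · rcases eq_or_ne j (M+1) with rfl | h1
      · rw [if_pos (Or.inr rfl), if_neg h0, if_pos rfl]; ring
      · rw [if_neg (by tauto), if_neg h0, if_neg h1]; ring
  rw [Finset.sum_congr rfl this]
  rw [Finset.sum_add_distrib, Finset.sum_add_distrib, Finset.sum_const,
    Finset.sum_ite_eq' (Finset.range (M+2)) 0 (fun _ => w - 1),
    Finset.sum_ite_eq' (Finset.range (M+2)) (M+1) (fun _ => w - 1)]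
  simp only [Finset.mem_range, Finset.card_range, nsmul_eq_mul, mul_one]
  rw [if_pos (by omega), if_pos (by omega)]
  push_cast; ring

lemma perms_zero : perms 0 = {[]} := by
  ext l; simp [mem_perms, List.range_zero, List.perm_nil]

lemma perms_one : perms 1 = {[0]} := by
  ext l
  rw [mem_perms, Finset.mem_singleton]
  have : List.range 1 = [0] := rfl
  rw [this, List.perm_singleton]

lemma sum_wiP {w : ℝ} (hw : 0 < w) : ∀ n : ℕ, ∑ l ∈ perms n, wiP w n l = 1
  | 0 => by rw [perms_zero]; simp [wiP]
  | 1 => by rw [perms_one]; simp [wiP]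
  | (M+2) => by
      rw [sum_perms_succ (M+1) (wiP w (M+2))]
      have : ∀ s ∈ perms (M+1),
          ∑ j ∈ Finset.range (M+2), wiP w (M+2) (s.insertIdx j (M+1))
            = wiP w (M+1) s := by
        intro s hs
        have : ∀ j ∈ Finset.range (M+2), wiP w (M+2) (s.insertIdx j (M+1))
            = (if j = 0 ∨ j = M+1 then w else 1) / (2*w + M) * wiP w (M+1) s := fun j hj =>
          wiP_insertIdx w M hs (Finset.mem_range.1 hj)
        rw [Finset.sum_congr rfl this]
        have hM : (0:ℝ) < 2*w + M := by positivity
        rw [← Finset.sum_mul, ← Finset.sum_div, weight_sum_total w M,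
          div_self (ne_of_gt hM), one_mul]
      rw [Finset.sum_congr rfl this]
      exact sum_wiP hw (M+1)

lemma mem_founders {l : List ℕ} {i : ℕ} :
    i ∈ founders l ↔ i < l.length ∧
      ((∀ j < i, l.getD i 0 < l.getD j 0) ∨
       (∀ j < l.length, i < j → l.getD i 0 < l.getD j 0)) := by
  simp [founders]

lemma zero_mem_founders {l : List ℕ} (h : 0 < l.length) : 0 ∈ founders l :=
  mem_founders.2 ⟨h, Or.inl (fun j hj => by omega)⟩

lemma last_mem_founders {l : List ℕ} (h : 0 < l.length) : l.length - 1 ∈ founders l :=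
  mem_founders.2 ⟨by omega, Or.inr (fun j hj hij => by omega)⟩

lemma pFound_boundary {w : ℝ} (hw : 0 < w) {n : ℕ} (hn : 1 ≤ n) :
    pFound w n 1 = 1 ∧ pFound w n n = 1 := by
  constructor
  · rw [pFound, ← sum_wiP hw n]
    refine Finset.sum_congr rfl fun l hl => ?_
    rw [if_pos]
    exact zero_mem_founders (by rw [perms_length hl]; omega)
  · rw [pFound, ← sum_wiP hw n]
    refine Finset.sum_congr rfl fun l hl => ?_
    rw [if_pos]
    have := last_mem_founders (l := l) (by rw [perms_length hl]; omega)
    rwa [perms_length hl] at this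

lemma pFound_nonneg {w : ℝ} (hw : 0 < w) (n k : ℕ) : 0 ≤ pFound w n k := by
  refine Finset.sum_nonneg fun l hl => ?_
  split
  · exact wiP_nonneg hw n l
  · exact le_refl 0

lemma pFound_le_one {w : ℝ} (hw : 0 < w) (n k : ℕ) : pFound w n k ≤ 1 := by
  rw [← sum_wiP hw n]
  refine Finset.sum_le_sum fun l hl => ?_
  split
  · exact le_refl _
  · exact wiP_nonneg hw n l

section InsertFounders

variable {n j : ℕ} {s : List ℕ}

lemma insert_length (hs : s ∈ perms n) (hj : j ≤ n) : (s.insertIdx j n).length = n + 1 := by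
  rw [List.length_insertIdx_of_le_length (by rw [perms_length hs]; omega), perms_length hs]

lemma insert_getD_lt (hs : s ∈ perms n) {p : ℕ} (hp : p < j) (hj : j ≤ n) :
    (s.insertIdx j n).getD p 0 = s.getD p 0 := by
  have hpl : p < s.length := by rw [perms_length hs]; omega
  rw [List.getD_eq_getElem _ _ (by rw [insert_length hs hj]; omega),
    List.getD_eq_getElem _ _ hpl]
  exact List.getElem_insertIdx_of_lt hp _

lemma insert_getD_self (hs : s ∈ perms n) (hj : j ≤ n) :
    (s.insertIdx j n).getD j 0 = n := by
  rw [List.getD_eq_getElem _ _ (by rw [insert_length hs hj]; omega)]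
  exact List.getElem_insertIdx_self _

lemma insert_getD_gt (hs : s ∈ perms n) {p : ℕ} (h1 : j < p) (h2 : p < n + 1)
    (hj : j ≤ n) : (s.insertIdx j n).getD p 0 = s.getD (p-1) 0 := by
  have hp1 : p - 1 < s.length := by rw [perms_length hs]; omega
  rw [List.getD_eq_getElem _ _ (by rw [insert_length hs hj]; omega),
    List.getD_eq_getElem _ _ hp1]
  have hkey := List.getElem_insertIdx_add_succ s n j (p - j - 1)
    (by rw [perms_length hs]; omega)
    (by rw [insert_length hs hj]; omega)
  have e1 : j + (p - j - 1) + 1 = p := by omega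
  have e2 : j + (p - j - 1) = p - 1 := by omega
  simp_rw [e1, e2] at hkey
  exact hkey

lemma perms_getD_lt (hs : s ∈ perms n) {p : ℕ} (hp : p < n) : s.getD p 0 < n := by
  have hpl : p < s.length := by rw [perms_length hs]; omega
  rw [List.getD_eq_getElem _ _ hpl]
  exact (perms_mem_iff hs).1 (List.getElem_mem hpl)

lemma founders_insertIdx_lt (hs : s ∈ perms n) (hj : j ≤ n) {q : ℕ} (hqj : q < j) :
    (q ∈ founders (s.insertIdx j n)) ↔ q ∈ founders s := by
  rw [mem_founders, mem_founders, insert_length hs hj, perms_length hs]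
  have hq : q < n := by omega
  have hgq : (s.insertIdx j n).getD q 0 = s.getD q 0 := insert_getD_lt hs hqj hj
  constructor
  · rintro ⟨-, hPS⟩
    refine ⟨hq, ?_⟩
    rcases hPS with hP | hS
    · left; intro p hp
      have := hP p hp
      rwa [hgq, insert_getD_lt hs (by omega) hj] at this
    · right; intro p hp hqp
      by_cases hpj : p < j
      · have := hS p (by omega) hqp
        rwa [hgq, insert_getD_lt hs hpj hj] at this
      · have := hS (p+1) (by omega) (by omega)
        rwa [hgq, insert_getD_gt hs (by omega) (by omega) hj, Nat.add_sub_cancel] at this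
  · rintro ⟨-, hPS⟩
    refine ⟨by omega, ?_⟩
    rcases hPS with hP | hS
    · left; intro p hp
      rw [hgq, insert_getD_lt hs (by omega) hj]
      exact hP p hp
    · right; intro p hp hqp
      rw [hgq]
      rcases lt_trichotomy p j with h | rfl | h
      · rw [insert_getD_lt hs h hj]; exact hS p (by omega) hqp
      · rw [insert_getD_self hs hj]; exact perms_getD_lt hs hq
      · rw [insert_getD_gt hs h hp hj]; exact hS (p-1) (by omega) (by omega)

lemma founders_insertIdx_self (hs : s ∈ perms n) (hj : j ≤ n) (hj0 : j ≠ 0) (hjn : j ≠ n) :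
    j ∉ founders (s.insertIdx j n) := by
  rw [mem_founders, insert_length hs hj, insert_getD_self hs hj]
  rintro ⟨-, hP | hS⟩
  · have := hP 0 (by omega)
    rw [insert_getD_lt hs (by omega) hj] at this
    exact absurd this (by have := perms_getD_lt hs (p := 0) (by omega); omega)
  · have := hS (j+1) (by omega) (by omega)
    rw [insert_getD_gt hs (by omega) (by omega) hj, Nat.add_sub_cancel] at this
    exact absurd this (by have := perms_getD_lt hs (p := j) (by omega); omega)

lemma founders_insertIdx_gt (hs : s ∈ perms n) (hj : j ≤ n) {q : ℕ} (hq : q < n + 1)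
    (hqj : j < q) : (q ∈ founders (s.insertIdx j n)) ↔ q - 1 ∈ founders s := by
  rw [mem_founders, mem_founders, insert_length hs hj, perms_length hs]
  have hgq : (s.insertIdx j n).getD q 0 = s.getD (q-1) 0 := insert_getD_gt hs hqj hq hj
  constructor
  · rintro ⟨-, hPS⟩
    refine ⟨by omega, ?_⟩
    rcases hPS with hP | hS
    · left; intro p hp
      by_cases hpj : p < j
      · have := hP p (by omega)
        rwa [hgq, insert_getD_lt hs hpj hj] at this
      · have := hP (p+1) (by omega)
        rwa [hgq, insert_getD_gt hs (by omega) (by omega) hj, Nat.add_sub_cancel] at this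
    · right; intro p hp hqp
      have := hS (p+1) (by omega) (by omega)
      rwa [hgq, insert_getD_gt hs (by omega) (by omega) hj, Nat.add_sub_cancel] at this
  · rintro ⟨-, hPS⟩
    refine ⟨by omega, ?_⟩
    rcases hPS with hP | hS
    · left; intro p hp
      rw [hgq]
      rcases lt_trichotomy p j with h | rfl | h
      · rw [insert_getD_lt hs h hj]; exact hP p (by omega)
      · rw [insert_getD_self hs hj]; exact perms_getD_lt hs (by omega)
      · rw [insert_getD_gt hs h (by omega) hj]; exact hP (p-1) (by omega)
    · right; intro p hp hqp
      rw [hgq, insert_getD_gt hs (by omega) hp hj]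
      exact hS (p-1) (by omega) (by omega)

end InsertFounders

lemma sum_weight_lt (w : ℝ) (M q : ℕ) (hq1 : 1 ≤ q) (hqM : q ≤ M + 1) :
    ∑ j ∈ Finset.range (M+2+1), (if j < q then (if j = 0 ∨ j = M+2 then w else 1) else 0)
      = w + q - 1 := by
  rw [← Finset.sum_subset (Finset.range_subset_range.2 (by omega : q ≤ M + 2 + 1))
    (fun x _ hx => if_neg (by simp at hx ⊢; omega))]
  rw [Finset.sum_congr rfl fun j hj => if_pos (Finset.mem_range.1 hj)]
  exact weight_sum w (M+1) q hq1 (by omega)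

lemma sum_weight_gt (w : ℝ) (M q : ℕ) (hq1 : 1 ≤ q) (hqM : q ≤ M + 1) :
    ∑ j ∈ Finset.range (M+2+1), (if q < j then (if j = 0 ∨ j = M+2 then w else 1) else 0)
      = w + (M:ℝ) + 1 - q := by
  have key : ∀ j ∈ Finset.range (M+2+1),
      (if q < j then (if j = 0 ∨ j = M+2 then w else 1) else 0)
        = (if j = 0 ∨ j = M+2 then w else 1)
          - (if j < q then (if j = 0 ∨ j = M+2 then w else 1) else 0)
          - (if j = q then (if j = 0 ∨ j = M+2 then w else 1) else 0) := by
    intro j hj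
    rcases lt_trichotomy j q with h | rfl | h
    · rw [if_neg (show ¬ q < j by omega), if_pos h, if_neg (show ¬ j = q by omega)]; ring
    · rw [if_neg (show ¬ j < j by omega), if_pos rfl]; ring
    · rw [if_pos h, if_neg (show ¬ j < q by omega), if_neg (show ¬ j = q by omega)]; ring
  rw [Finset.sum_congr rfl key]
  rw [Finset.sum_sub_distrib, Finset.sum_sub_distrib, sum_weight_lt w M q hq1 hqM,
    show ∑ j ∈ Finset.range (M+2+1), (if j = 0 ∨ j = M+2 then w else 1) = 2*w + (M+1:ℕ) by
      rw [show M + 2 + 1 = (M+1) + 2 by omega]; exact weight_sum_total w (M+1),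
    Finset.sum_ite_eq' (Finset.range (M+2+1)) q (fun j => if j = 0 ∨ j = M+2 then w else 1)]
  rw [if_pos (Finset.mem_range.2 (by omega)), if_neg (by omega)]
  push_cast; ring

lemma pFound_rec {w : ℝ} (hw : 0 < w) (M k : ℕ) (hk2 : 2 ≤ k) (hkn : k ≤ M + 2) :
    pFound w (M+3) k =
      ((w + (k:ℝ) - 2) * pFound w (M+2) (k-1) + (w + ((M:ℝ)+2) - k) * pFound w (M+2) k) /
        (2*w + ((M:ℝ)+2) - 1) := by
  have hq1 : 1 ≤ k - 1 := by omega
  have hqM : k - 1 ≤ M + 1 := by omega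
  have hD : (0:ℝ) < 2*w + ((M:ℝ)+1) := by positivity
  rw [pFound, show M + 3 = (M+2) + 1 from rfl, sum_perms_succ (M+2)]
  have step1 : ∀ s ∈ perms (M+2),
      (∑ j ∈ Finset.range (M+2+1),
        if k - 1 ∈ founders (s.insertIdx j (M+2)) then wiP w (M+2+1) (s.insertIdx j (M+2)) else 0)
      = ((if k-1-1 ∈ founders s then (w + (k:ℝ) - 2) else 0)
          + (if k-1 ∈ founders s then (w + (M:ℝ) + 2 - k) else 0))
          / (2*w + ((M:ℝ)+1)) * wiP w (M+2) s := by
    intro s hs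
    have step2 : ∀ j ∈ Finset.range (M+2+1),
        (if k - 1 ∈ founders (s.insertIdx j (M+2)) then wiP w (M+2+1) (s.insertIdx j (M+2)) else 0)
        = ((if j < k-1 then (if k-1-1 ∈ founders s then (if j = 0 ∨ j = M+2 then w else 1) else 0) else 0)
           + (if k-1 < j then (if k-1 ∈ founders s then (if j = 0 ∨ j = M+2 then w else 1) else 0) else 0))
          / (2*w + ((M:ℝ)+1)) * wiP w (M+2) s := by
      intro j hj
      have hjr : j < M + 3 := by simp at hj; omega
      have hwi : wiP w (M+2+1) (s.insertIdx j (M+2))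
          = (if j = 0 ∨ j = M+2 then w else 1) / (2*w + ((M:ℝ)+1)) * wiP w (M+2) s := by
        have := wiP_insertIdx w (M+1) hs (j := j) (by omega)
        rw [this]; push_cast; ring_nf
      rcases lt_trichotomy j (k-1) with h | h | h
      · simp only [founders_insertIdx_gt hs (by omega) (by omega) h]
        rw [hwi, if_pos h, if_neg (show ¬ k - 1 < j by omega)]
        split_ifs with h1 <;> ring
      · rw [← h, if_neg (founders_insertIdx_self hs (by omega) (by omega) (by omega)),
          if_neg (show ¬ j < j by omega), if_neg (show ¬ j < j by omega)]
        simp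
      · simp only [founders_insertIdx_lt hs (by omega) h]
        rw [hwi, if_neg (show ¬ j < k - 1 by omega), if_pos h]
        split_ifs with h1 <;> ring
    rw [Finset.sum_congr rfl step2]
    rw [← Finset.sum_mul, ← Finset.sum_div, Finset.sum_add_distrib]
    have e1 : (∑ j ∈ Finset.range (M+2+1),
        if j < k-1 then (if k-1-1 ∈ founders s then (if j = 0 ∨ j = M+2 then w else 1) else 0) else 0)
        = (if k-1-1 ∈ founders s then w + (k:ℝ) - 2 else 0) := by
      by_cases h1 : k-1-1 ∈ founders s
      · simp only [if_pos h1]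
        rw [sum_weight_lt w M (k-1) hq1 hqM, Nat.cast_sub (by omega : 1 ≤ k)]
        push_cast; ring
      · simp only [if_neg h1]
        simp
    have e2 : (∑ j ∈ Finset.range (M+2+1),
        if k-1 < j then (if k-1 ∈ founders s then (if j = 0 ∨ j = M+2 then w else 1) else 0) else 0)
        = (if k-1 ∈ founders s then w + (M:ℝ) + 2 - k else 0) := by
      by_cases h2 : k-1 ∈ founders s
      · simp only [if_pos h2]
        rw [sum_weight_gt w M (k-1) hq1 hqM, Nat.cast_sub (by omega : 1 ≤ k)]
        push_cast; ring
      · simp only [if_neg h2]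
        simp
    rw [e1, e2]
  rw [Finset.sum_congr rfl step1]
  have hDeq : 2*w + ((M:ℝ)+2) - 1 = 2*w + ((M:ℝ)+1) := by ring
  rw [hDeq]
  simp only [pFound]
  rw [Finset.mul_sum, Finset.mul_sum, ← Finset.sum_add_distrib, Finset.sum_div]
  refine Finset.sum_congr rfl fun s hs => ?_
  split_ifs <;> ring

lemma pFound_symm {w : ℝ} (hw : 0 < w) :
    ∀ n, ∀ k, 1 ≤ k → k ≤ n → pFound w n (n + 1 - k) = pFound w n k := by
  intro n
  induction n with
  | zero => intro k h1 h2; omega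
  | succ n IH =>
    intro k hk1 hk2
    rcases eq_or_lt_of_le hk1 with rfl | hk1'
    · rw [show n + 1 + 1 - 1 = n + 1 by omega,
        (pFound_boundary hw (show 1 ≤ n+1 by omega)).2,
        (pFound_boundary hw (show 1 ≤ n+1 by omega)).1]
    · rcases eq_or_lt_of_le hk2 with rfl | hk2'
      · rw [show n + 1 + 1 - (n + 1) = 1 by omega,
          (pFound_boundary hw (show 1 ≤ n + 1 by omega)).2,
          (pFound_boundary hw (show 1 ≤ n + 1 by omega)).1]
      · -- 2 ≤ k ≤ n
        have hk2n : k ≤ n := by omega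
        have hkk : 2 ≤ k := by omega
        obtain ⟨m, rfl⟩ : ∃ m, n = m + 2 := ⟨n - 2, by omega⟩
        suffices h : pFound w (m+3) (m+4-k) = pFound w (m+3) k by
          rw [show m + 2 + 1 + 1 - k = m + 4 - k by omega]
          exact h
        rw [pFound_rec hw m k hkk (by omega),
          pFound_rec hw m (m+4-k) (by omega) (by omega)]
        rw [show m+4-k-1 = m+2+1-k by omega, IH k (by omega) (by omega),
          show m+4-k = m+2+1-(k-1) by omega, IH (k-1) (by omega) (by omega)]
        have c1 : ((m+2+1-(k-1) : ℕ) : ℝ) = (m:ℝ) + 4 - k := by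
          rw [Nat.cast_sub (by omega), Nat.cast_sub (by omega)]
          push_cast; ring
        rw [c1]
        ring

lemma pFound_unimodal {w : ℝ} (hw : 0 < w) :
    ∀ n, ∀ k, 1 ≤ k → 2*k ≤ n → pFound w n (k+1) ≤ pFound w n k := by
  intro n
  induction n with
  | zero => intro k h1 h2; omega
  | succ n IH =>
    intro k hk1 hk2
    rcases eq_or_lt_of_le hk1 with rfl | hk1'
    · rw [(pFound_boundary hw (show 1 ≤ n+1 by omega)).1]
      exact pFound_le_one hw _ _
    · have hkk : 2 ≤ k := by omega
      obtain ⟨m, rfl⟩ : ∃ m, n = m + 2 := ⟨n - 2, by omega⟩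
      show pFound w (m+3) (k+1) ≤ pFound w (m+3) k
      rw [pFound_rec hw m k hkk (by omega),
        pFound_rec hw m (k+1) (by omega) (by omega),
        Nat.add_sub_cancel]
      have hm0 : (0:ℝ) ≤ (m:ℝ) := Nat.cast_nonneg m
      have hD : (0:ℝ) < 2*w + ((m:ℝ)+2) - 1 := by linarith
      have hkR : (2:ℝ) ≤ (k:ℝ) := by exact_mod_cast hkk
      have hab : pFound w (m+2) k ≤ pFound w (m+2) (k-1) := by
        have := IH (k-1) (by omega) (by omega)
        rwa [show k - 1 + 1 = k by omega] at this
      rcases eq_or_lt_of_le hk2 with heq | hlt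
      · -- 2k = m+3 : equality case via symmetry
        have hca : pFound w (m+2) (k+1) = pFound w (m+2) (k-1) := by
          have := pFound_symm hw (m+2) (k+1) (by omega) (by omega)
          rw [show m+2+1-(k+1) = k-1 by omega] at this
          exact this.symm
        refine le_of_eq ?_
        have hmR : (m:ℝ) + 3 = 2*(k:ℝ) := by exact_mod_cast heq.symm
        rw [hca]
        push_cast
        linear_combination ((pFound w (m+2) (k-1) - pFound w (m+2) k) / (2*w + ((m:ℝ)+2) - 1)) * hmR
      · -- 2k ≤ m+2
        have hbc : pFound w (m+2) (k+1) ≤ pFound w (m+2) k := IH k (by omega) (by omega)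
        have hkmR : (k:ℝ) ≤ (m:ℝ) + 1 := by
          have : k ≤ m + 1 := by omega
          exact_mod_cast this
        rw [div_le_div_iff₀ hD hD]
        push_cast
        nlinarith [mul_nonneg (by linarith : (0:ℝ) ≤ w + (k:ℝ) - 2)
            (sub_nonneg.2 hab),
          mul_nonneg (by linarith : (0:ℝ) ≤ w + ((m:ℝ)+2) - (k:ℝ) - 1)
            (sub_nonneg.2 hbc)]


/-- `p_{n,k} = P(k ∈ F(Λ^{[n]}))` satisfies `p_{n,1} = p_{n,n} = 1`,
the symmetry `p_{n,n+1-k} = p_{n,k}`, the recurrence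
`p_{n+1,k} = [(w+k-2) p_{n,k-1} + (w+n-k) p_{n,k}]/(2w+n-1)` for `2 ≤ k ≤ n`,
and unimodality `p_{n,k} ≥ p_{n,k+1}` for `k < n/2`. -/
theorem pFound_properties (w : ℝ) (hw : 0 < w) :
    (∀ n : ℕ, 1 ≤ n → pFound w n 1 = 1 ∧ pFound w n n = 1) ∧
    (∀ n k : ℕ, 1 ≤ k → k ≤ n → pFound w n (n + 1 - k) = pFound w n k) ∧
    (∀ n k : ℕ, 2 ≤ k → k ≤ n →
      pFound w (n + 1) k =
        ((w + (k : ℝ) - 2) * pFound w n (k - 1) + (w + (n : ℝ) - k) * pFound w n k) /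
          (2 * w + (n : ℝ) - 1)) ∧
    (∀ n k : ℕ, 1 ≤ k → (k : ℝ) < (n : ℝ) / 2 → pFound w n (k + 1) ≤ pFound w n k) := by
  refine ⟨fun n hn => pFound_boundary hw hn,
    fun n k hk1 hk2 => pFound_symm hw n k hk1 hk2, ?_, ?_⟩
  · intro n k hk2 hkn
    obtain ⟨m, rfl⟩ : ∃ m, n = m + 2 := ⟨n - 2, by omega⟩
    have h := pFound_rec hw m k hk2 hkn
    rw [show ((m:ℝ)+2) = (((m+2:ℕ)):ℝ) by push_cast; ring] at h
    exact h
  · intro n k hk1 hklt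
    have h2k : 2*k < n := by
      have : (2*(k:ℝ)) < n := by linarith
      exact_mod_cast this
    exact pFound_unimodal hw n k hk1 (by omega)
end

section
/- Fix w > 0 and intervals [a,b] ⊆ [A,B] of integers. Let Λ be the weighted-insertion order with weight w on [A,B]. Conditionally on the event that no founder of Λ lies in [a,b], the restriction of Λ to [a,b] is a uniformly random total order on [a,b]. -/
open scoped Classical

lemma perms_getD_lt_s9 {n : ℕ} {l : List ℕ} (h : l ∈ perms n) {i : ℕ} (hi : i < n) :
    l.getD i 0 < n := by
  have hi' : i < l.length := by rw [perms_length h]; exact hi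
  rw [List.getD_eq_getElem l 0 hi']
  exact (perms_mem_iff h).1 (List.getElem_mem _)

lemma perms_getD_inj {n : ℕ} {l : List ℕ} (h : l ∈ perms n) {i j : ℕ}
    (hi : i < n) (hj : j < n) (hij : l.getD i 0 = l.getD j 0) : i = j := by
  have hi' : i < l.length := by rw [perms_length h]; exact hi
  have hj' : j < l.length := by rw [perms_length h]; exact hj
  rw [List.getD_eq_getElem l 0 hi', List.getD_eq_getElem l 0 hj'] at hij
  exact (List.Nodup.getElem_inj_iff (perms_nodup h)).1 hij

lemma perms_surj {n : ℕ} {l : List ℕ} (h : l ∈ perms n) {v : ℕ} (hv : v < n) :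
    ∃ i, i < n ∧ l.getD i 0 = v := by
  have : v ∈ l := (perms_mem_iff h).2 hv
  obtain ⟨i, hi, hiv⟩ := List.mem_iff_getElem.1 this
  exact ⟨i, by rw [← perms_length h]; exact hi, by rw [List.getD_eq_getElem l 0 hi]; exact hiv⟩

-- counting machinery

def cnt (t : List ℕ) (x : ℕ) : ℕ := t.countP (fun v => decide (v < x))

lemma cnt_perm {t t' : List ℕ} (h : t.Perm t') (x : ℕ) : cnt t x = cnt t' x :=
  h.countP_eq _

lemma cnt_range {m x : ℕ} (hx : x ≤ m) : cnt (List.range m) x = x := by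
  induction m with
  | zero => interval_cases x; simp [cnt]
  | succ m ih =>
    unfold cnt at *
    rw [List.range_succ, List.countP_append]
    rw [List.countP_singleton]
    rcases Nat.lt_or_ge x (m+1) with h | h
    · have h2 : ¬ (m < x) := by omega
      rw [ih (by omega)]; simp [h2]
    · have h2 : m < x := by omega
      have h3 : List.countP (fun v => decide (v < x)) (List.range m) = m := by
        rw [List.countP_eq_length.2 (fun v hv => by
          simp only [decide_eq_true_eq]; exact lt_of_lt_of_le (List.mem_range.1 hv) (by omega))]
        simp
      rw [h3]; simp [h2]; omega

lemma cnt_lt {t : List ℕ} {x y : ℕ} (hx : x ∈ t) (hxy : x < y) : cnt t x < cnt t y := by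
  induction t with
  | nil => simp at hx
  | cons h ts ih =>
    have hmono : cnt ts x ≤ cnt ts y :=
      List.countP_mono_left (fun v _ hv => by
        simp only [decide_eq_true_eq] at hv ⊢; omega)
    rcases List.mem_cons.1 hx with rfl | hx'
    · have h1 : ¬ (x < x) := lt_irrefl x
      simp only [cnt, List.countP_cons, decide_eq_true_eq, h1, if_false, hxy, if_true]
      simp only [cnt] at hmono; omega
    · have := ih hx'
      simp only [cnt, List.countP_cons, decide_eq_true_eq] at this ⊢
      by_cases hh : h < x
      · have hh' : h < y := by omega
        simp [hh, hh']; omega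
      · simp only [hh, if_false]
        by_cases hh' : h < y <;> simp [hh'] <;> omega

lemma cnt_inj {t : List ℕ} {x y : ℕ} (hx : x ∈ t) (hy : y ∈ t) (h : cnt t x = cnt t y) :
    x = y := by
  rcases Nat.lt_trichotomy x y with hl | he | hl
  · exact absurd h (Nat.ne_of_lt (cnt_lt hx hl))
  · exact he
  · exact absurd h.symm (Nat.ne_of_lt (cnt_lt hy hl))

lemma cnt_sorted {t : List ℕ} (hs : t.Pairwise (· < ·)) {k : ℕ} (hk : k < t.length) :
    cnt t (t.getD k 0) = k := by
  induction t generalizing k with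
  | nil => simp at hk
  | cons h ts ih =>
    rcases Nat.eq_zero_or_pos k with rfl | hk0
    · simp only [cnt, List.countP_cons, List.getD_cons_zero]
      have h1 : List.countP (fun v => decide (v < h)) ts = 0 :=
        List.countP_eq_zero.2 (fun v hv => by
          simp only [decide_eq_true_eq]
          exact not_lt.2 (le_of_lt ((List.pairwise_cons.1 hs).1 v hv)))
      simp [h1]
    · obtain ⟨k', rfl⟩ := Nat.exists_eq_succ_of_ne_zero (Nat.pos_iff_ne_zero.1 hk0)
      have hk' : k' < ts.length := by simpa using hk
      have hgd : (h :: ts).getD (k' + 1) 0 = ts.getD k' 0 := rfl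
      rw [hgd, List.getD_eq_getElem ts 0 hk']
      have hmem : ts[k'] ∈ ts := List.getElem_mem _
      have hh : h < ts[k'] := (List.pairwise_cons.1 hs).1 _ hmem
      have := ih (List.pairwise_cons.1 hs).2 hk'
      rw [List.getD_eq_getElem ts 0 hk'] at this
      simp only [cnt, List.countP_cons, decide_eq_true_eq] at this ⊢
      simp [hh, this]

lemma self_eq_map_range (l : List ℕ) :
    l = (List.range l.length).map (fun i => l.getD i 0) := by
  apply List.ext_getElem (by simp)
  intro i h1 h2
  simp only [List.getElem_map, List.getElem_range]
  exact (List.getD_eq_getElem l 0 h1).symm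

lemma founders_eraseIdx {l : List ℕ} {p : ℕ} (hp : p < l.length)
    (hmax : ∀ j < l.length, j ≠ p → l.getD j 0 < l.getD p 0) :
    (founders l).card
      = (founders (l.eraseIdx p)).card + (if p = 0 ∨ p = l.length - 1 then 1 else 0) := by
  set l' := l.eraseIdx p with hl'
  have hlen : l'.length = l.length - 1 := by
    rw [hl', List.length_eraseIdx]; simp [hp]
  set e : ℕ → ℕ := fun i => if i < p then i else i + 1 with he
  have hget : ∀ i', (hi' : i' < l'.length) → l'.getD i' 0 = l.getD (e i') 0 := by
    intro i' hi'
    have hlb : i' < l.length - 1 := by rw [← hlen]; exact hi'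
    have h1 : l'[i'] = if h' : i' < p then l[i']'(by omega) else l[i'+1]'(by omega) :=
      List.getElem_eraseIdx hi'
    rw [List.getD_eq_getElem l' 0 hi', h1]
    by_cases h : i' < p
    · rw [dif_pos h, List.getD_eq_getElem l 0 (show e i' < l.length by rw [he]; dsimp only; split_ifs <;> omega)]
      simp only [he]
      simp [h]
    · rw [dif_neg h, List.getD_eq_getElem l 0 (show e i' < l.length by rw [he]; dsimp only; split_ifs <;> omega)]
      simp only [he]
      simp [h]
  have hemem : ∀ i', i' < l'.length → e i' < l.length := by
    intro i' hi'; rw [hlen] at hi'; rw [he]; dsimp only; split_ifs <;> omega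
  have hene : ∀ i', e i' ≠ p := by intro i'; rw [he]; dsimp only; split_ifs <;> omega
  -- the main index-shifting equivalence
  have mainIff : ∀ i', i' < l'.length → (i' ∈ founders l' ↔ e i' ∈ founders l) := by
    intro i' hi'
    have hei : e i' < l.length := hemem i' hi'
    have hc : l'.getD i' 0 = l.getD (e i') 0 := hget i' hi'
    have hclt : l.getD (e i') 0 < l.getD p 0 := hmax _ hei (hene i')
    rw [mem_founders, mem_founders]
    constructor
    · rintro ⟨-, hlr⟩
      refine ⟨hei, ?_⟩
      rcases hlr with hL | hR
      · left; intro j hj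
        by_cases hjp : j = p
        · subst hjp; exact hclt
        · have hj'lt : (if j < p then j else j - 1) < i' := by
            simp only [he] at hj; split_ifs at hj ⊢ <;> omega
          have hej : e (if j < p then j else j - 1) = j := by
            simp only [he]; split_ifs <;> omega
          have := hL _ hj'lt
          rw [hc, hget _ (lt_trans hj'lt hi'), hej] at this
          exact this
      · right; intro j hj hij
        by_cases hjp : j = p
        · subst hjp; exact hclt
        · have hj'lt : (if j < p then j else j - 1) < l'.length := by
            rw [hlen]; split <;> omega
          have hij' : i' < (if j < p then j else j - 1) := by
            simp only [he] at hij; split_ifs at hij ⊢ <;> omega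
          have hej : e (if j < p then j else j - 1) = j := by
            simp only [he]; split_ifs <;> omega
          have := hR _ hj'lt hij'
          rw [hc, hget _ hj'lt, hej] at this
          exact this
    · rintro ⟨-, hlr⟩
      refine ⟨hi', ?_⟩
      rcases hlr with hL | hR
      · left; intro j' hj'
        have hje : e j' < e i' := by simp only [he]; split_ifs <;> omega
        have := hL _ hje
        rw [hc, hget j' (lt_trans hj' hi')]
        exact this
      · right; intro j' hj' hij'
        have hje : e i' < e j' := by simp only [he]; split_ifs <;> omega
        have := hR _ (hemem j' hj') hje
        rw [hc, hget j' hj']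
        exact this
  -- p is a founder iff it is an endpoint
  have pIff : p ∈ founders l ↔ (p = 0 ∨ p = l.length - 1) := by
    rw [mem_founders]
    constructor
    · rintro ⟨-, hlr⟩
      by_contra hne
      push_neg at hne
      rcases hlr with hL | hR
      · have h0 : (0:ℕ) < p := by omega
        have := hL 0 h0
        exact absurd this (not_lt.2 (le_of_lt (hmax 0 (by omega) (by omega))))
      · have hll : p < l.length - 1 := by omega
        have := hR (l.length - 1) (by omega) (by omega)
        exact absurd this (not_lt.2 (le_of_lt (hmax (l.length - 1) (by omega) (by omega))))
    · intro h
      refine ⟨hp, ?_⟩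
      rcases h with h | h
      · left; intro j hj; omega
      · right; intro j hj hij; omega
  -- decomposition of founders l
  have heinj : Function.Injective e := by
    intro x y hxy
    rw [he] at hxy; dsimp only at hxy
    split_ifs at hxy <;> omega
  have hpnot : ∀ i', e i' ≠ p := hene
  have hdecomp : founders l
      = (if p = 0 ∨ p = l.length - 1 then {p} else ∅) ∪ (founders l').image e := by
    ext i
    rw [Finset.mem_union, Finset.mem_image]
    by_cases hip : i = p
    · constructor
      · intro h
        left
        rw [hip] at h ⊢
        rw [if_pos (pIff.1 h)]
        exact Finset.mem_singleton_self p
      · rintro (h | ⟨i', hi', hei⟩)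
        · rw [hip]
          by_cases hcond : p = 0 ∨ p = l.length - 1
          · exact pIff.2 hcond
          · rw [if_neg hcond] at h; simp at h
        · exfalso; rw [hip] at hei; exact hpnot i' hei
    · have hii' : ∀ (hi : i < l.length), e (if i < p then i else i - 1) = i := by
        intro hi; simp only [he]; split_ifs <;> omega
      constructor
      · intro h
        right
        have hi : i < l.length := (mem_founders.1 h).1
        have hi'len : (if i < p then i else i - 1) < l'.length := by
          rw [hlen]; split <;> omega
        refine ⟨_, ?_, hii' hi⟩
        rw [mainIff _ hi'len, hii' hi]
        exact h
      · rintro (h | ⟨i', hi', hei⟩)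
        · exfalso
          by_cases hcond : p = 0 ∨ p = l.length - 1
          · rw [if_pos hcond] at h; exact hip (Finset.mem_singleton.1 h)
          · rw [if_neg hcond] at h; simp at h
        · rw [← hei]
          rw [← mainIff i' ?_]
          · exact hi'
          · exact (mem_founders.1 hi').1
  rw [hdecomp, Finset.card_union_of_disjoint, Finset.card_image_of_injective _ heinj]
  · split <;> simp [Nat.add_comm]
  · apply Finset.disjoint_left.2
    intro x hx hx'
    obtain ⟨i', -, hei⟩ := Finset.mem_image.1 hx'
    split at hx
    · rw [Finset.mem_singleton] at hx; subst hx; exact hpnot i' hei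
    · simp at hx

lemma perms_one_s9 {l : List ℕ} (hl : l ∈ perms 1) : l = [0] := by
  have h := mem_perms.1 hl
  rw [show List.range 1 = [0] from rfl] at h
  exact List.perm_singleton.1 h

lemma founders_single : founders [0] = {0} := by
  ext i
  simp only [mem_founders, List.length_singleton, Finset.mem_singleton]
  constructor
  · rintro ⟨h1, -⟩; omega
  · rintro rfl
    exact ⟨by norm_num, Or.inl (fun j hj => absurd hj (Nat.not_lt_zero j))⟩

lemma erase_mem_perms {n : ℕ} {l : List ℕ} (hl : l ∈ perms (n+2)) :
    l.erase (n+1) ∈ perms (n+1) := by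
  rw [mem_perms]
  have h1 : (l.erase (n+1)).Perm ((List.range (n+2)).erase (n+1)) :=
    (mem_perms.1 hl).erase (n+1)
  have h2 : (List.range (n+2)).erase (n+1) = List.range (n+1) := by
    rw [List.range_succ, List.erase_append_right _ (by simp)]
    simp
  rw [h2] at h1
  exact h1

lemma wiP_eq (w : ℝ) (hw : 0 < w) (n : ℕ) : ∀ l ∈ perms (n+1),
    wiP w (n+1) l
      = w ^ ((founders l).card - 1) / ∏ k ∈ Finset.range n, (2*w + (k:ℝ)) := by
  induction n with
  | zero =>
    intro l hl
    rw [perms_one_s9 hl, founders_single]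
    simp [wiP]
  | succ n ih =>
    intro l hl
    have hlenl : l.length = n + 2 := perms_length hl
    have hv : (n+1) ∈ l := (perms_mem_iff hl).2 (by omega)
    set p := l.idxOf (n+1) with hpdef
    have hplen : p < l.length := List.idxOf_lt_length_iff.2 hv
    have hgp : l.getD p 0 = n + 1 := by
      rw [List.getD_eq_getElem l 0 hplen]
      exact List.getElem_idxOf hplen
    have hmax : ∀ j < l.length, j ≠ p → l.getD j 0 < l.getD p 0 := by
      intro j hj hjp
      rw [hgp]
      have h1 : l.getD j 0 < n + 2 := perms_getD_lt_s9 hl (by omega)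
      have h2 : l.getD j 0 ≠ n + 1 := by
        intro h
        exact hjp (perms_getD_inj hl (by omega) (by omega) (h.trans hgp.symm))
      omega
    have herase : l.eraseIdx p = l.erase (n+1) := List.eraseIdx_idxOf_eq_erase _ _
    have hl' : l.erase (n+1) ∈ perms (n+1) := erase_mem_perms hl
    have hcard : (founders l).card
        = (founders (l.erase (n+1))).card + (if p = 0 ∨ p = l.length - 1 then 1 else 0) := by
      rw [← herase]; exact founders_eraseIdx hplen hmax
    have h0 : 0 < (founders (l.erase (n+1))).card :=
      Finset.card_pos.2 ⟨0, zero_mem_founders (by rw [perms_length hl']; omega)⟩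
    have hih := ih _ hl'
    show ((if p = 0 ∨ p = l.length - 1 then w else 1) / (2 * w + (n:ℝ))) * wiP w (n+1) (l.erase (n+1)) = _
    rw [hih, Finset.prod_range_succ]
    have hd1 : (2*w + (n:ℝ)) ≠ 0 := by positivity
    have hd2 : (∏ k ∈ Finset.range n, (2*w + (k:ℝ))) ≠ 0 := by positivity
    by_cases hC : p = 0 ∨ p = l.length - 1
    · rw [if_pos hC]
      rw [hcard, if_pos hC]
      have hc1 : (founders (l.erase (n+1))).card + 1 - 1
          = ((founders (l.erase (n+1))).card - 1) + 1 := by omega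
      rw [hc1, pow_succ]
      field_simp
    · rw [if_neg hC]
      rw [hcard, if_neg hC]
      field_simp
      ring

-- block machinery
noncomputable def blockS (a m : ℕ) (l : List ℕ) : Finset ℕ :=
  (Finset.range m).image (fun i => l.getD (a+i) 0)

noncomputable def srt (a m : ℕ) (l : List ℕ) : List ℕ :=
  (blockS a m l).sort (· ≤ ·)

noncomputable def rebuild (N a b : ℕ) (l s : List ℕ) : List ℕ :=
  List.ofFn (fun i : Fin N =>
    if a ≤ (i:ℕ) ∧ (i:ℕ) ≤ b then (srt a (b-a+1) l).getD (s.getD ((i:ℕ) - a) 0) 0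
    else l.getD (i:ℕ) 0)

lemma mem_blockS {a m : ℕ} {l : List ℕ} {x : ℕ} :
    x ∈ blockS a m l ↔ ∃ i, i < m ∧ l.getD (a+i) 0 = x := by
  simp [blockS]

lemma blockS_card {N a b m : ℕ} {l : List ℕ} (hm : b + 1 = a + m) (hbN : b < N)
    (hl : l ∈ perms N) : (blockS a m l).card = m := by
  rw [blockS, Finset.card_image_of_injOn, Finset.card_range]
  intro i hi j hj hij
  have hi' : i < m := Finset.mem_range.1 hi
  have hj' : j < m := Finset.mem_range.1 hj
  have := perms_getD_inj hl (show a+i < N by omega) (show a+j < N by omega) hij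
  omega

lemma srt_length {N a b m : ℕ} {l : List ℕ} (hm : b + 1 = a + m) (hbN : b < N)
    (hl : l ∈ perms N) : (srt a m l).length = m := by
  rw [srt, Finset.length_sort]
  exact blockS_card hm hbN hl

lemma srt_sorted {a m : ℕ} {l : List ℕ} : (srt a m l).Pairwise (· < ·) :=
  (Finset.sortedLT_sort _).pairwise

lemma mem_srt {a m : ℕ} {l : List ℕ} {x : ℕ} : x ∈ srt a m l ↔ x ∈ blockS a m l :=
  Finset.mem_sort _

lemma srt_getD_mem {N a b m : ℕ} {l : List ℕ} (hm : b + 1 = a + m) (hbN : b < N)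
    (hl : l ∈ perms N) {k : ℕ} (hk : k < m) : (srt a m l).getD k 0 ∈ blockS a m l := by
  have hk' : k < (srt a m l).length := by rw [srt_length hm hbN hl]; exact hk
  rw [← mem_srt, List.getD_eq_getElem _ 0 hk']
  exact List.getElem_mem _

lemma srt_surj {N a b m : ℕ} {l : List ℕ} (hm : b + 1 = a + m) (hbN : b < N)
    (hl : l ∈ perms N) {x : ℕ} (hx : x ∈ blockS a m l) :
    ∃ k, k < m ∧ (srt a m l).getD k 0 = x := by
  rw [← mem_srt] at hx
  obtain ⟨k, hk, hkx⟩ := List.mem_iff_getElem.1 hx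
  refine ⟨k, by rw [← srt_length hm hbN hl]; exact hk, ?_⟩
  rw [List.getD_eq_getElem _ 0 hk]; exact hkx

lemma srt_lt_iff {N a b m : ℕ} {l : List ℕ} (hm : b + 1 = a + m) (hbN : b < N)
    (hl : l ∈ perms N) {k k' : ℕ} (hk : k < m) (hk' : k' < m) :
    (srt a m l).getD k 0 < (srt a m l).getD k' 0 ↔ k < k' := by
  have h1 : k < (srt a m l).length := by rw [srt_length hm hbN hl]; exact hk
  have h2 : k' < (srt a m l).length := by rw [srt_length hm hbN hl]; exact hk'
  rw [List.getD_eq_getElem _ 0 h1, List.getD_eq_getElem _ 0 h2]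
  have hmono := (srt_sorted (a := a) (m := m) (l := l)).sortedLT.strictMono_get
  constructor
  · intro h
    by_contra hc
    rcases Nat.lt_or_ge k' k with hlt | hge
    · exact absurd (hmono (show (⟨k', h2⟩ : Fin _) < ⟨k, h1⟩ from hlt)) (by
        simp only [List.get_eq_getElem]; omega)
    · have : k = k' := by omega
      subst this; omega
  · intro h
    exact hmono (show (⟨k, h1⟩ : Fin _) < ⟨k', h2⟩ from h)

lemma rebuild_length {N a b : ℕ} (l s : List ℕ) : (rebuild N a b l s).length = N := by
  simp [rebuild]

lemma rebuild_getD {N a b : ℕ} (l s : List ℕ) {i : ℕ} (hi : i < N) :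
    (rebuild N a b l s).getD i 0
      = if a ≤ i ∧ i ≤ b then (srt a (b-a+1) l).getD (s.getD (i - a) 0) 0
        else l.getD i 0 := by
  have hi' : i < (rebuild N a b l s).length := by rw [rebuild_length]; exact hi
  rw [List.getD_eq_getElem _ 0 hi']
  simp [rebuild, List.getElem_ofFn]

lemma nodup_of_getD_inj {l : List ℕ}
    (h : ∀ i j, i < l.length → j < l.length → l.getD i 0 = l.getD j 0 → i = j) :
    l.Nodup := by
  rw [List.nodup_iff_injective_get]
  rintro ⟨i, hi⟩ ⟨j, hj⟩ hij
  simp only [List.get_eq_getElem] at hij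
  exact Fin.ext (h i j hi hj (by
    rw [List.getD_eq_getElem _ 0 hi, List.getD_eq_getElem _ 0 hj]; exact hij))

lemma perm_range_of {l : List ℕ} {n : ℕ} (hlen : l.length = n) (hnd : l.Nodup)
    (hmem : ∀ v ∈ l, v < n) : l ∈ perms n := by
  rw [mem_perms]
  refine List.perm_of_nodup_nodup_toFinset_eq hnd List.nodup_range ?_
  have hrt : (List.range n).toFinset = Finset.range n := by
    ext x; simp
  apply Finset.eq_of_subset_of_card_le
  · intro v hv
    rw [hrt]
    exact Finset.mem_range.2 (hmem v (List.mem_toFinset.1 hv))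
  · rw [hrt, Finset.card_range, List.toFinset_card_of_nodup hnd, hlen]

lemma founders_block_eq {N a b m : ℕ} (hm : b + 1 = a + m) (hbN : b < N) (hm0 : 0 < m)
    {l r : List ℕ} (hl : l ∈ perms N) (hr : r ∈ perms N)
    (hout : ∀ i, i < N → (i < a ∨ b < i) → r.getD i 0 = l.getD i 0)
    (hS : blockS a m r = blockS a m l)
    (hnf : ∀ i ∈ founders l, i < a ∨ b < i) :
    founders r = founders l := by
  have hlen : l.length = N := perms_length hl
  have hrlen : r.length = N := perms_length hr
  have hSne : (blockS a m l).Nonempty := ⟨_, mem_blockS.2 ⟨0, hm0, rfl⟩⟩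
  set μ := (blockS a m l).min' hSne with hμ
  have hμS : μ ∈ blockS a m l := Finset.min'_mem _ _
  have hμmin : ∀ x ∈ blockS a m l, μ ≤ x := fun x hx => Finset.min'_le _ x hx
  obtain ⟨d₀, hd₀, hpμ⟩ := mem_blockS.1 hμS
  set p := a + d₀ with hpdef
  have hpN : p < N := by omega
  have hpnf : p ∉ founders l := by
    intro h
    have := hnf p h
    omega
  rw [mem_founders] at hpnf
  push_neg at hpnf
  obtain ⟨⟨j₁, hj₁p, hj₁le⟩, j₂, hj₂len, hj₂p, hj₂le⟩ := hpnf (by omega)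
  have hj₁lt : l.getD j₁ 0 < μ := by
    have hne : l.getD j₁ 0 ≠ μ := fun h => by
      have := perms_getD_inj hl (show j₁ < N by omega) hpN (h.trans hpμ.symm); omega
    rw [hpμ] at hj₁le
    omega
  have hj₂lt : l.getD j₂ 0 < μ := by
    have hne : l.getD j₂ 0 ≠ μ := fun h => by
      rw [hlen] at hj₂len
      have := perms_getD_inj hl (show j₂ < N by omega) hpN (h.trans hpμ.symm); omega
    rw [hpμ] at hj₂le
    omega
  have hj₂N : j₂ < N := by rw [hlen] at hj₂len; exact hj₂len
  have hj₁a : j₁ < a := by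
    by_contra hc
    have hmem : l.getD j₁ 0 ∈ blockS a m l :=
      mem_blockS.2 ⟨j₁ - a, by omega, by rw [show a + (j₁ - a) = j₁ by omega]⟩
    have := hμmin _ hmem; omega
  have hj₂b : b < j₂ := by
    by_contra hc
    have hmem : l.getD j₂ 0 ∈ blockS a m l :=
      mem_blockS.2 ⟨j₂ - a, by omega, by rw [show a + (j₂ - a) = j₂ by omega]⟩
    have := hμmin _ hmem; omega
  have hrblock : ∀ d, d < m → μ ≤ r.getD (a+d) 0 := by
    intro d hd
    apply hμmin
    rw [← hS]
    exact mem_blockS.2 ⟨d, hd, rfl⟩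
  have hrj₁ : r.getD j₁ 0 = l.getD j₁ 0 := hout _ (by omega) (Or.inl hj₁a)
  have hrj₂ : r.getD j₂ 0 = l.getD j₂ 0 := hout _ hj₂N (Or.inr hj₂b)
  have hblockAll : ∀ c : ℕ,
      ((∀ d, d < m → c < l.getD (a+d) 0) ↔ (∀ d, d < m → c < r.getD (a+d) 0)) := by
    intro c
    constructor
    · intro h d hd
      have hx : r.getD (a+d) 0 ∈ blockS a m l := by
        rw [← hS]; exact mem_blockS.2 ⟨d, hd, rfl⟩
      obtain ⟨d', hd', he⟩ := mem_blockS.1 hx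
      rw [← he]; exact h d' hd'
    · intro h d hd
      have hx : l.getD (a+d) 0 ∈ blockS a m r := by
        rw [hS]; exact mem_blockS.2 ⟨d, hd, rfl⟩
      obtain ⟨d', hd', he⟩ := mem_blockS.1 hx
      rw [← he]; exact h d' hd'
  ext i
  by_cases hiN : i < N
  · by_cases hia : i < a
    · -- i left of block
      have hri : r.getD i 0 = l.getD i 0 := hout i hiN (Or.inl hia)
      rw [mem_founders, mem_founders, hlen, hrlen]
      apply and_congr_right'
      apply or_congr
      · constructor
        · intro h j hj
          rw [← hri, ← hout j (by omega) (Or.inl (by omega))]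
          exact h j hj
        · intro h j hj
          rw [hri, hout j (by omega) (Or.inl (by omega))]
          exact h j hj
      · constructor
        · intro h j hj hij
          by_cases hjb : j < a ∨ b < j
          · rw [← hri, ← hout j hj hjb]
            exact h j hj hij
          · push_neg at hjb
            have hall : ∀ d, d < m → r.getD i 0 < r.getD (a+d) 0 := by
              intro d hd
              exact h (a+d) (by omega) (by omega)
            rw [hri] at hall
            have := (hblockAll _).2 hall (j - a) (by omega)
            rw [show a + (j - a) = j by omega] at this
            exact this
        · intro h j hj hij
          by_cases hjb : j < a ∨ b < j
          · rw [hri, hout j hj hjb]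
            exact h j hj hij
          · push_neg at hjb
            have hall : ∀ d, d < m → l.getD i 0 < l.getD (a+d) 0 := by
              intro d hd
              exact h (a+d) (by omega) (by omega)
            have := (hblockAll _).1 hall (j - a) (by omega)
            rw [show a + (j - a) = j by omega] at this
            rw [hri]
            exact this
    · by_cases hib : b < i
      · -- i right of block
        have hri : r.getD i 0 = l.getD i 0 := hout i hiN (Or.inr hib)
        rw [mem_founders, mem_founders, hlen, hrlen]
        apply and_congr_right'
        apply or_congr
        · constructor
          · intro h j hj
            by_cases hjb : j < a ∨ b < j
            · rw [← hri, ← hout j (by omega) hjb]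
              exact h j hj
            · push_neg at hjb
              have hall : ∀ d, d < m → r.getD i 0 < r.getD (a+d) 0 := by
                intro d hd
                exact h (a+d) (by omega)
              rw [hri] at hall
              have := (hblockAll _).2 hall (j - a) (by omega)
              rw [show a + (j - a) = j by omega] at this
              exact this
          · intro h j hj
            by_cases hjb : j < a ∨ b < j
            · rw [hri, hout j (by omega) hjb]
              exact h j hj
            · push_neg at hjb
              have hall : ∀ d, d < m → l.getD i 0 < l.getD (a+d) 0 := by
                intro d hd
                exact h (a+d) (by omega)
              have := (hblockAll _).1 hall (j - a) (by omega)
              rw [show a + (j - a) = j by omega] at this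
              rw [hri]
              exact this
        · constructor
          · intro h j hj hij
            rw [← hri, ← hout j (by omega) (Or.inr (by omega))]
            exact h j hj hij
          · intro h j hj hij
            rw [hri, hout j (by omega) (Or.inr (by omega))]
            exact h j hj hij
      · -- i in the block : both sides false
        have hiab : a ≤ i ∧ i ≤ b := by omega
        apply iff_of_false
        · rw [mem_founders]
          rintro ⟨-, hA | hB⟩
          · have h1 := hA j₁ (by omega)
            have h2 : μ ≤ r.getD i 0 := by
              have := hrblock (i - a) (by omega)
              rw [show a + (i - a) = i by omega] at this
              exact this
            rw [hrj₁] at h1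
            omega
          · have h1 := hB j₂ (by omega) (by omega)
            have h2 : μ ≤ r.getD i 0 := by
              have := hrblock (i - a) (by omega)
              rw [show a + (i - a) = i by omega] at this
              exact this
            rw [hrj₂] at h1
            omega
        · intro h
          have := hnf i h
          omega
  · apply iff_of_false
    · rw [mem_founders]; rintro ⟨h, -⟩; rw [hrlen] at h; omega
    · rw [mem_founders]; rintro ⟨h, -⟩; rw [hlen] at h; omega

lemma mem_getD {l : List ℕ} {v : ℕ} : v ∈ l ↔ ∃ i, i < l.length ∧ l.getD i 0 = v := by
  rw [List.mem_iff_getElem]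
  constructor
  · rintro ⟨i, hi, hv⟩; exact ⟨i, hi, by rw [List.getD_eq_getElem _ 0 hi]; exact hv⟩
  · rintro ⟨i, hi, hv⟩; exact ⟨i, hi, by rw [← List.getD_eq_getElem _ 0 hi]; exact hv⟩

lemma lists_eq_of_getD {l₁ l₂ : List ℕ} (hlen : l₁.length = l₂.length)
    (h : ∀ i < l₁.length, l₁.getD i 0 = l₂.getD i 0) : l₁ = l₂ := by
  apply List.ext_getElem hlen
  intro i h1 h2
  rw [← List.getD_eq_getElem l₁ 0 h1, ← List.getD_eq_getElem l₂ 0 h2]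
  exact h i h1

lemma srt_getD_inj {N a b m : ℕ} {l : List ℕ} (hm : b + 1 = a + m) (hbN : b < N)
    (hl : l ∈ perms N) {k k' : ℕ} (hk : k < m) (hk' : k' < m)
    (h : (srt a m l).getD k 0 = (srt a m l).getD k' 0) : k = k' := by
  by_contra hc
  rcases Nat.lt_or_ge k k' with h1 | h1
  · have := (srt_lt_iff hm hbN hl hk hk').2 h1; omega
  · have := (srt_lt_iff hm hbN hl hk' hk).2 (by omega); omega

lemma rebuild_block_getD {N a b m : ℕ} (hm : b + 1 = a + m) (hm0 : 0 < m) (hbN : b < N)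
    (l s : List ℕ) {i : ℕ} (hi : i < m) :
    (rebuild N a b l s).getD (a+i) 0 = (srt a m l).getD (s.getD i 0) 0 := by
  rw [rebuild_getD l s (show a+i < N by omega), if_pos (by omega),
    show a + i - a = i by omega, show b - a + 1 = m by omega]

lemma rebuild_outside {N a b : ℕ} (l s : List ℕ) {i : ℕ} (hi : i < N) (ho : i < a ∨ b < i) :
    (rebuild N a b l s).getD i 0 = l.getD i 0 := by
  rw [rebuild_getD l s hi, if_neg (by omega)]

lemma rebuild_blockS {N a b m : ℕ} (hm : b + 1 = a + m) (hm0 : 0 < m) (hbN : b < N)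
    {l s : List ℕ} (hl : l ∈ perms N) (hs : s ∈ perms m) :
    blockS a m (rebuild N a b l s) = blockS a m l := by
  ext x
  constructor
  · intro hx
    obtain ⟨i, hi, hix⟩ := mem_blockS.1 hx
    rw [rebuild_block_getD hm hm0 hbN l s hi] at hix
    rw [← hix]
    exact srt_getD_mem hm hbN hl (perms_getD_lt_s9 hs hi)
  · intro hx
    obtain ⟨k, hk, hkx⟩ := srt_surj hm hbN hl hx
    obtain ⟨i, hi, hik⟩ := perms_surj hs hk
    exact mem_blockS.2 ⟨i, hi, by rw [rebuild_block_getD hm hm0 hbN l s hi, hik, hkx]⟩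

lemma rebuild_mem_perms {N a b m : ℕ} (hm : b + 1 = a + m) (hm0 : 0 < m) (hbN : b < N)
    {l s : List ℕ} (hl : l ∈ perms N) (hs : s ∈ perms m) :
    rebuild N a b l s ∈ perms N := by
  have hsm : s.length = m := perms_length hs
  have hblock : ∀ i, a ≤ i → i ≤ b → (rebuild N a b l s).getD i 0 ∈ blockS a m l := by
    intro i h1 h2
    have : (rebuild N a b l s).getD i 0 = (srt a m l).getD (s.getD (i-a) 0) 0 := by
      have h3 := rebuild_block_getD hm hm0 hbN l s (show i - a < m by omega)
      rw [show a + (i - a) = i by omega] at h3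
      exact h3
    rw [this]
    exact srt_getD_mem hm hbN hl (perms_getD_lt_s9 hs (show i - a < m by omega))
  have hblockN : ∀ x ∈ blockS a m l, x < N := by
    intro x hx
    obtain ⟨d, hd, hdx⟩ := mem_blockS.1 hx
    rw [← hdx]
    exact perms_getD_lt_s9 hl (by omega)
  apply perm_range_of (rebuild_length l s)
  · apply nodup_of_getD_inj
    intro i j hi hj hij
    rw [rebuild_length] at hi hj
    by_cases hia : a ≤ i ∧ i ≤ b <;> by_cases hja : a ≤ j ∧ j ≤ b
    · -- both in block
      rw [show i = a + (i - a) by omega, rebuild_block_getD hm hm0 hbN l s (show i - a < m by omega),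
        show j = a + (j - a) by omega, rebuild_block_getD hm hm0 hbN l s (show j - a < m by omega)] at hij
      have h1 := srt_getD_inj hm hbN hl (perms_getD_lt_s9 hs (show i - a < m by omega))
        (perms_getD_lt_s9 hs (show j - a < m by omega)) hij
      have := perms_getD_inj hs (show i - a < m by omega) (show j - a < m by omega) h1
      omega
    · exfalso
      have h1 : (rebuild N a b l s).getD i 0 ∈ blockS a m l := hblock i hia.1 hia.2
      rw [hij, rebuild_outside l s hj (by omega)] at h1
      obtain ⟨d, hd, hdx⟩ := mem_blockS.1 h1
      have := perms_getD_inj hl (show a + d < N by omega) hj hdx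
      omega
    · exfalso
      have h1 : (rebuild N a b l s).getD j 0 ∈ blockS a m l := hblock j hja.1 hja.2
      rw [← hij, rebuild_outside l s hi (by omega)] at h1
      obtain ⟨d, hd, hdx⟩ := mem_blockS.1 h1
      have := perms_getD_inj hl (show a + d < N by omega) hi hdx
      omega
    · rw [rebuild_outside l s hi (by omega), rebuild_outside l s hj (by omega)] at hij
      exact perms_getD_inj hl hi hj hij
  · intro v hv
    obtain ⟨i, hi, hiv⟩ := mem_getD.1 hv
    rw [rebuild_length] at hi
    by_cases hia : a ≤ i ∧ i ≤ b
    · rw [← hiv]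
      exact hblockN _ (hblock i hia.1 hia.2)
    · rw [rebuild_outside l s hi (by omega)] at hiv
      rw [← hiv]
      exact perms_getD_lt_s9 hl hi

lemma rebuild_restrEq {N a b m : ℕ} (hm : b + 1 = a + m) (hm0 : 0 < m) (hbN : b < N)
    {l s : List ℕ} (hl : l ∈ perms N) (hs : s ∈ perms m) :
    restrEq (rebuild N a b l s) a s := by
  intro i hi j hj
  have hsm : s.length = m := perms_length hs
  rw [hsm] at hi hj
  rw [rebuild_block_getD hm hm0 hbN l s hi, rebuild_block_getD hm hm0 hbN l s hj]
  exact srt_lt_iff hm hbN hl (perms_getD_lt_s9 hs hi) (perms_getD_lt_s9 hs hj)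

lemma rebuild_srt_eq {N a b m : ℕ} (hm : b + 1 = a + m) (hm0 : 0 < m) (hbN : b < N)
    {l s : List ℕ} (hl : l ∈ perms N) (hs : s ∈ perms m) :
    srt a m (rebuild N a b l s) = srt a m l := by
  unfold srt
  rw [rebuild_blockS hm hm0 hbN hl hs]

lemma rebuild_rebuild {N a b m : ℕ} (hm : b + 1 = a + m) (hm0 : 0 < m) (hbN : b < N)
    {l s s' : List ℕ} (hl : l ∈ perms N) (hs : s ∈ perms m) :
    rebuild N a b (rebuild N a b l s) s' = rebuild N a b l s' := by
  apply lists_eq_of_getD (by rw [rebuild_length, rebuild_length])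
  intro i hi
  rw [rebuild_length] at hi
  by_cases hia : a ≤ i ∧ i ≤ b
  · rw [show i = a + (i - a) by omega,
      rebuild_block_getD hm hm0 hbN _ s' (show i - a < m by omega),
      rebuild_block_getD hm hm0 hbN l s' (show i - a < m by omega),
      rebuild_srt_eq hm hm0 hbN hl hs]
  · rw [rebuild_outside _ s' hi (by omega), rebuild_outside l s' hi (by omega),
      rebuild_outside l s hi (by omega)]

lemma blist_perm_srt {N a b m : ℕ} (hm : b + 1 = a + m) (hbN : b < N)
    {l : List ℕ} (hl : l ∈ perms N) :
    ((List.range m).map (fun j => l.getD (a+j) 0)).Perm (srt a m l) := by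
  apply List.perm_of_nodup_nodup_toFinset_eq
  · apply List.Nodup.map_on ?_ List.nodup_range
    intro x hx y hy hxy
    have hx' : x < m := List.mem_range.1 hx
    have hy' : y < m := List.mem_range.1 hy
    have := perms_getD_inj hl (show a+x < N by omega) (show a+y < N by omega) hxy
    omega
  · exact Finset.sort_nodup _ _
  · ext x
    simp only [List.mem_toFinset, List.mem_map, List.mem_range]
    rw [mem_srt, mem_blockS]

lemma cnt_getD_form {m : ℕ} {s : List ℕ} (hsm : s.length = m) (y : ℕ) :
    cnt s y = (List.range m).countP (fun j => decide (s.getD j 0 < y)) := by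
  conv_lhs => rw [cnt, show s = (List.range s.length).map (fun i => s.getD i 0) from
    self_eq_map_range s]
  rw [List.countP_map, hsm]
  rfl

lemma restr_getD_eq_cnt {N a b m : ℕ} (hm : b + 1 = a + m) (hm0 : 0 < m) (hbN : b < N)
    {l s : List ℕ} (hl : l ∈ perms N) (hs : s ∈ perms m) (hres : restrEq l a s)
    {d : ℕ} (hd : d < m) :
    s.getD d 0 = cnt (srt a m l) (l.getD (a+d) 0) := by
  have hsm : s.length = m := perms_length hs
  have h1 : cnt (srt a m l) (l.getD (a+d) 0)
      = cnt ((List.range m).map (fun j => l.getD (a+j) 0)) (l.getD (a+d) 0) :=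
    (cnt_perm (blist_perm_srt hm hbN hl) _).symm
  have h2 : cnt ((List.range m).map (fun j => l.getD (a+j) 0)) (l.getD (a+d) 0)
      = (List.range m).countP (fun j => decide (l.getD (a+j) 0 < l.getD (a+d) 0)) := by
    rw [cnt, List.countP_map]
    rfl
  have h3 : (List.range m).countP (fun j => decide (l.getD (a+j) 0 < l.getD (a+d) 0))
      = (List.range m).countP (fun j => decide (s.getD j 0 < s.getD d 0)) := by
    apply List.countP_congr
    intro j hj
    have hjm : j < m := List.mem_range.1 hj
    have := hres j (by omega) d (by omega)
    simp only [decide_eq_true_eq]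
    exact this
  have h4 : (List.range m).countP (fun j => decide (s.getD j 0 < s.getD d 0))
      = cnt s (s.getD d 0) := (cnt_getD_form hsm _).symm
  have h5 : cnt s (s.getD d 0) = s.getD d 0 := by
    rw [cnt_perm (mem_perms.1 hs)]
    exact cnt_range (le_of_lt (perms_getD_lt_s9 hs hd))
  rw [h1, h2, h3, h4, h5]

lemma cnt_srt_getD {N a b m : ℕ} (hm : b + 1 = a + m) (hbN : b < N)
    {l : List ℕ} (hl : l ∈ perms N) {x : ℕ} (hx : x ∈ blockS a m l) :
    (srt a m l).getD (cnt (srt a m l) x) 0 = x := by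
  obtain ⟨k, hk, hkx⟩ := srt_surj hm hbN hl hx
  rw [← hkx, cnt_sorted srt_sorted (by rw [srt_length hm hbN hl]; exact hk)]

lemma cnt_srt_lt {N a b m : ℕ} (hm : b + 1 = a + m) (hbN : b < N)
    {l : List ℕ} (hl : l ∈ perms N) {x : ℕ} (hx : x ∈ blockS a m l) :
    cnt (srt a m l) x < m := by
  obtain ⟨k, hk, hkx⟩ := srt_surj hm hbN hl hx
  rw [← hkx, cnt_sorted srt_sorted (by rw [srt_length hm hbN hl]; exact hk)]
  exact hk

lemma rebuild_self {N a b m : ℕ} (hm : b + 1 = a + m) (hm0 : 0 < m) (hbN : b < N)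
    {l s : List ℕ} (hl : l ∈ perms N) (hs : s ∈ perms m) (hres : restrEq l a s) :
    rebuild N a b l s = l := by
  apply lists_eq_of_getD (by rw [rebuild_length, perms_length hl])
  intro i hi
  rw [rebuild_length] at hi
  by_cases hia : a ≤ i ∧ i ≤ b
  · have hd : i - a < m := by omega
    have h1 := rebuild_block_getD hm hm0 hbN l s hd
    rw [show a + (i - a) = i by omega] at h1
    rw [h1, restr_getD_eq_cnt hm hm0 hbN hl hs hres hd,
      show a + (i - a) = i by omega]
    exact cnt_srt_getD hm hbN hl (mem_blockS.2 ⟨i - a, hd, by rw [show a + (i-a) = i by omega]⟩)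
  · exact rebuild_outside l s hi (by omega)

noncomputable def patt (a m : ℕ) (l : List ℕ) : List ℕ :=
  List.ofFn (fun i : Fin m => cnt (srt a m l) (l.getD (a + (i:ℕ)) 0))

lemma patt_length (a m : ℕ) (l : List ℕ) : (patt a m l).length = m := by simp [patt]

lemma patt_getD {a m : ℕ} (l : List ℕ) {i : ℕ} (hi : i < m) :
    (patt a m l).getD i 0 = cnt (srt a m l) (l.getD (a+i) 0) := by
  have hi' : i < (patt a m l).length := by rw [patt_length]; exact hi
  rw [List.getD_eq_getElem _ 0 hi']
  simp [patt, List.getElem_ofFn]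

lemma getD_mem_blockS {N a b m : ℕ} (hm : b + 1 = a + m) (hbN : b < N)
    (l : List ℕ) {d : ℕ} (hd : d < m) : l.getD (a+d) 0 ∈ blockS a m l :=
  mem_blockS.2 ⟨d, hd, rfl⟩

lemma patt_mem_perms {N a b m : ℕ} (hm : b + 1 = a + m) (hm0 : 0 < m) (hbN : b < N)
    {l : List ℕ} (hl : l ∈ perms N) : patt a m l ∈ perms m := by
  apply perm_range_of (patt_length a m l)
  · apply nodup_of_getD_inj
    intro i j hi hj hij
    rw [patt_length] at hi hj
    rw [patt_getD l hi, patt_getD l hj] at hij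
    have h1 : (srt a m l).getD (cnt (srt a m l) (l.getD (a+i) 0)) 0
        = (srt a m l).getD (cnt (srt a m l) (l.getD (a+j) 0)) 0 := by rw [hij]
    rw [cnt_srt_getD hm hbN hl (getD_mem_blockS hm hbN l hi),
      cnt_srt_getD hm hbN hl (getD_mem_blockS hm hbN l hj)] at h1
    have := perms_getD_inj hl (show a+i < N by omega) (show a+j < N by omega) h1
    omega
  · intro v hv
    obtain ⟨i, hi, hiv⟩ := mem_getD.1 hv
    rw [patt_length] at hi
    rw [patt_getD l hi] at hiv
    rw [← hiv]
    exact cnt_srt_lt hm hbN hl (getD_mem_blockS hm hbN l hi)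

lemma patt_restrEq {N a b m : ℕ} (hm : b + 1 = a + m) (hm0 : 0 < m) (hbN : b < N)
    {l : List ℕ} (hl : l ∈ perms N) : restrEq l a (patt a m l) := by
  intro i hi j hj
  rw [patt_length] at hi hj
  rw [patt_getD l hi, patt_getD l hj]
  set ki := cnt (srt a m l) (l.getD (a+i) 0) with hki
  set kj := cnt (srt a m l) (l.getD (a+j) 0) with hkj
  have h1 : (srt a m l).getD ki 0 = l.getD (a+i) 0 :=
    cnt_srt_getD hm hbN hl (getD_mem_blockS hm hbN l hi)
  have h2 : (srt a m l).getD kj 0 = l.getD (a+j) 0 :=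
    cnt_srt_getD hm hbN hl (getD_mem_blockS hm hbN l hj)
  rw [← h1, ← h2]
  exact srt_lt_iff hm hbN hl (cnt_srt_lt hm hbN hl (getD_mem_blockS hm hbN l hi))
    (cnt_srt_lt hm hbN hl (getD_mem_blockS hm hbN l hj))

lemma patt_unique {N a b m : ℕ} (hm : b + 1 = a + m) (hm0 : 0 < m) (hbN : b < N)
    {l s : List ℕ} (hl : l ∈ perms N) (hs : s ∈ perms m) (hres : restrEq l a s) :
    s = patt a m l := by
  apply lists_eq_of_getD (by rw [perms_length hs, patt_length])
  intro i hi
  rw [perms_length hs] at hi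
  rw [patt_getD l hi]
  exact restr_getD_eq_cnt hm hm0 hbN hl hs hres hi

lemma perms_card (m : ℕ) : (perms m).card = m.factorial := by
  rw [perms, List.toFinset_card_of_nodup (List.nodup_permutations _ List.nodup_range),
    List.length_permutations, List.length_range]

lemma slice_sum_eq (w : ℝ) (hw : 0 < w) {N a b m : ℕ}
    (hm : b + 1 = a + m) (hm0 : 0 < m) (hbN : b < N)
    {s s' : List ℕ} (hs : s ∈ perms m) (hs' : s' ∈ perms m) :
    (∑ l ∈ perms N,
        if (∀ i ∈ founders l, i < a ∨ b < i) ∧ restrEq l a s then wiP w N l else 0)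
      = ∑ l ∈ perms N,
          if (∀ i ∈ founders l, i < a ∨ b < i) ∧ restrEq l a s' then wiP w N l else 0 := by
  obtain ⟨n, rfl⟩ : ∃ n, N = n + 1 := ⟨N - 1, by omega⟩
  rw [← Finset.sum_filter, ← Finset.sum_filter]
  have key : ∀ (t t' : List ℕ), t ∈ perms m → t' ∈ perms m →
      ∀ l ∈ (perms (n+1)).filter
        (fun l => (∀ i ∈ founders l, i < a ∨ b < i) ∧ restrEq l a t),
      rebuild (n+1) a b l t' ∈ (perms (n+1)).filter
        (fun l => (∀ i ∈ founders l, i < a ∨ b < i) ∧ restrEq l a t') := by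
    intro t t' ht ht' l hl
    obtain ⟨hlp, hnf, hres⟩ : l ∈ perms (n+1) ∧ (∀ i ∈ founders l, i < a ∨ b < i)
        ∧ restrEq l a t := by
      have := Finset.mem_filter.1 hl
      exact ⟨this.1, this.2.1, this.2.2⟩
    have hrp := rebuild_mem_perms hm hm0 hbN hlp ht'
    have hfound : founders (rebuild (n+1) a b l t') = founders l :=
      founders_block_eq hm hbN hm0 hlp hrp
        (fun i hi ho => rebuild_outside l t' hi ho)
        (rebuild_blockS hm hm0 hbN hlp ht') hnf
    refine Finset.mem_filter.2 ⟨hrp, ?_, rebuild_restrEq hm hm0 hbN hlp ht'⟩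
    rw [hfound]
    exact hnf
  apply Finset.sum_nbij' (fun l => rebuild (n+1) a b l s') (fun r => rebuild (n+1) a b r s)
  · exact key s s' hs hs'
  · exact key s' s hs' hs
  · intro l hl
    obtain ⟨hlp, -, hres⟩ : l ∈ perms (n+1) ∧ (∀ i ∈ founders l, i < a ∨ b < i)
        ∧ restrEq l a s := by
      have := Finset.mem_filter.1 hl
      exact ⟨this.1, this.2.1, this.2.2⟩
    rw [rebuild_rebuild hm hm0 hbN hlp hs']
    exact rebuild_self hm hm0 hbN hlp hs hres
  · intro r hr
    obtain ⟨hrp, -, hres⟩ : r ∈ perms (n+1) ∧ (∀ i ∈ founders r, i < a ∨ b < i)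
        ∧ restrEq r a s' := by
      have := Finset.mem_filter.1 hr
      exact ⟨this.1, this.2.1, this.2.2⟩
    rw [rebuild_rebuild hm hm0 hbN hrp hs]
    exact rebuild_self hm hm0 hbN hrp hs' hres
  · intro l hl
    obtain ⟨hlp, hnf, hres⟩ : l ∈ perms (n+1) ∧ (∀ i ∈ founders l, i < a ∨ b < i)
        ∧ restrEq l a s := by
      have := Finset.mem_filter.1 hl
      exact ⟨this.1, this.2.1, this.2.2⟩
    have hrp := rebuild_mem_perms hm hm0 hbN hlp hs'
    have hfound : founders (rebuild (n+1) a b l s') = founders l :=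
      founders_block_eq hm hbN hm0 hlp hrp
        (fun i hi ho => rebuild_outside l s' hi ho)
        (rebuild_blockS hm hm0 hbN hlp hs') hnf
    rw [wiP_eq w hw n l hlp, wiP_eq w hw n _ hrp, hfound]

/-- for intervals `[a,b] ⊆ [A,B]` (encoded as positions
`a,…,b ⊆ 0,…,N-1`), conditionally on the event that no founder of the
weighted-insertion order `Λ` on `[A,B]` lies in `[a,b]`, the restriction of
`Λ` to `[a,b]` is a uniformly random total order on `[a,b]`. -/
theorem conditional_restriction_uniform (w : ℝ) (hw : 0 < w)
    (N a b : ℕ) (hab : a ≤ b) (hbN : b < N) :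
    ∀ s ∈ perms (b - a + 1),
      (∑ l ∈ perms N,
          if (∀ i ∈ founders l, i < a ∨ b < i) ∧ restrEq l a s then wiP w N l else 0)
        = (1 / (Nat.factorial (b - a + 1) : ℝ)) *
          ∑ l ∈ perms N,
            if (∀ i ∈ founders l, i < a ∨ b < i) then wiP w N l else 0 := by

  intro s hs
  set m := b - a + 1 with hmdef
  have hm : b + 1 = a + m := by omega
  have hm0 : 0 < m := by omega
  have key1 : (∑ s' ∈ perms m, ∑ l ∈ perms N,
        if (∀ i ∈ founders l, i < a ∨ b < i) ∧ restrEq l a s' then wiP w N l else 0)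
      = ∑ l ∈ perms N, if (∀ i ∈ founders l, i < a ∨ b < i) then wiP w N l else 0 := by
    rw [Finset.sum_comm]
    apply Finset.sum_congr rfl
    intro l hl
    rw [Finset.sum_eq_single_of_mem (patt a m l) (patt_mem_perms hm hm0 hbN hl)]
    · by_cases hc : (∀ i ∈ founders l, i < a ∨ b < i)
      · rw [if_pos hc, if_pos ⟨hc, patt_restrEq hm hm0 hbN hl⟩]
      · rw [if_neg hc, if_neg (fun h => hc h.1)]
    · intro s'' hs'' hne
      rw [if_neg]
      rintro ⟨-, hr⟩
      exact hne (patt_unique hm hm0 hbN hl hs'' hr)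
  have key3 : (∑ s' ∈ perms m, ∑ l ∈ perms N,
        if (∀ i ∈ founders l, i < a ∨ b < i) ∧ restrEq l a s' then wiP w N l else 0)
      = (m.factorial : ℝ) * ∑ l ∈ perms N,
          if (∀ i ∈ founders l, i < a ∨ b < i) ∧ restrEq l a s then wiP w N l else 0 := by
    have hcongr : ∀ s' ∈ perms m, (∑ l ∈ perms N,
          if (∀ i ∈ founders l, i < a ∨ b < i) ∧ restrEq l a s' then wiP w N l else 0)
        = ∑ l ∈ perms N,
          if (∀ i ∈ founders l, i < a ∨ b < i) ∧ restrEq l a s then wiP w N l else 0 :=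
      fun s' hs' => slice_sum_eq w hw hm hm0 hbN hs' hs
    rw [Finset.sum_congr rfl hcongr, Finset.sum_const, perms_card, nsmul_eq_mul]
  have hf : (m.factorial : ℝ) ≠ 0 := Nat.cast_ne_zero.2 m.factorial_ne_zero
  rw [← key1, key3, one_div, inv_mul_cancel_left₀ hf]
end

section
/- Fix w > 0 and m ≥ 1. For n > m let Λ^n be the weighted-insertion order with weight w on [-n,n]. As n → ∞, the restriction Λ^n|_{[-m,m]} converges in total variation (equivalently, in law, since the space is finite) to a uniformly random total order on [-m,m]. -/
open scoped Classical

namespace WIhelp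


lemma perm_insertIdx (x : ℕ) : ∀ (n : ℕ) (l : List ℕ), n ≤ l.length →
    (l.insertIdx n x).Perm (x :: l)
  | 0, l, _ => by simp
  | (n+1), [], h => by simp at h
  | (n+1), (a :: l), h => by
      simp only [List.insertIdx_succ_cons]
      exact (((perm_insertIdx x n l (by simpa using h)).cons a).trans (List.Perm.swap x a l))

lemma indexOf_insertIdx {x : ℕ} : ∀ (n : ℕ) (l : List ℕ), x ∉ l → n ≤ l.length →
    (l.insertIdx n x).idxOf x = n
  | 0, l, _, _ => by simp
  | (n+1), [], _, h => by simp at h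
  | (n+1), (a :: l), hx, h => by
      simp only [List.insertIdx_succ_cons]
      have hax : a ≠ x := fun hax => hx (by simp [hax])
      rw [List.idxOf_cons_ne _ hax, indexOf_insertIdx n l (fun hm => hx (List.mem_cons_of_mem a hm)) (by simpa using h)]

lemma erase_insertIdx {x : ℕ} : ∀ (n : ℕ) (l : List ℕ), x ∉ l → n ≤ l.length →
    (l.insertIdx n x).erase x = l
  | 0, l, _, _ => by simp
  | (n+1), [], _, h => by simp at h
  | (n+1), (a :: l), hx, h => by
      simp only [List.insertIdx_succ_cons]
      rw [List.erase_cons_tail, erase_insertIdx n l (fun hm => hx (List.mem_cons_of_mem a hm)) (by simpa using h)]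
      simp only [beq_iff_eq]
      exact fun hax => hx (by simp [hax])

lemma insertIdx_indexOf_erase {x : ℕ} : ∀ (l : List ℕ), x ∈ l →
    ((l.erase x).insertIdx (l.idxOf x) x) = l
  | [], h => by simp at h
  | (a :: l), h => by
      by_cases hax : a = x
      · subst hax; simp
      · rw [List.idxOf_cons_ne _ hax, List.erase_cons_tail (by simpa using hax)]
        simp only [List.insertIdx_succ_cons]
        rw [insertIdx_indexOf_erase l (by rcases List.mem_cons.mp h with h'|h'; exact absurd h'.symm hax; exact h')]





lemma mem_perms {n : ℕ} {l : List ℕ} : l ∈ perms n ↔ l.Perm (List.range n) := by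
  simp [perms, List.mem_toFinset, List.mem_permutations]

lemma range_succ_perm (n : ℕ) : (List.range (n+1)).Perm (n :: List.range n) := by
  rw [List.range_succ, ← List.insertIdx_length_self]
  exact perm_insertIdx n _ _ (by simp)

lemma length_of_mem_perms {n : ℕ} {l : List ℕ} (h : l ∈ perms n) : l.length = n := by
  simpa using (mem_perms.mp h).length_eq

lemma not_mem_self_perms {n : ℕ} {l : List ℕ} (h : l ∈ perms n) : n ∉ l := by
  intro hn
  have := (mem_perms.mp h).mem_iff.mp hn
  simp at this

lemma mem_self_perms {n : ℕ} {l : List ℕ} (h : l ∈ perms (n+1)) : n ∈ l := by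
  exact (mem_perms.mp h).mem_iff.mpr (by simp)

lemma lt_of_mem_perms {n : ℕ} {l : List ℕ} (h : l ∈ perms n) {x : ℕ} (hx : x ∈ l) : x < n := by
  have := (mem_perms.mp h).mem_iff.mp hx; simpa using this

lemma insertIdx_mem_perms {n p : ℕ} {l : List ℕ} (h : l ∈ perms n) (hp : p ≤ n) :
    l.insertIdx p n ∈ perms (n+1) := by
  refine mem_perms.mpr ?_
  refine (perm_insertIdx n p l (by rw [length_of_mem_perms h]; exact hp)).trans ?_
  exact ((mem_perms.mp h).cons n).trans (range_succ_perm n).symm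

lemma erase_mem_perms {n : ℕ} {l : List ℕ} (h : l ∈ perms (n+1)) :
    l.erase n ∈ perms n := by
  refine mem_perms.mpr ?_
  refine ((mem_perms.mp h).erase n).trans ?_
  have : (List.range (n+1)).erase n = List.range n := by
    rw [List.range_succ, List.erase_append_right _ (by simp), List.erase_cons_head, List.append_nil]
  rw [this]

lemma sum_perms_succ (n : ℕ) (F : List ℕ → ℝ) :
    ∑ l ∈ perms (n+1), F l
      = ∑ p ∈ Finset.range (n+1), ∑ l ∈ perms n, F (l.insertIdx p n) := by
  rw [← Finset.sum_product']
  refine Finset.sum_nbij' (s := perms (n+1)) (t := Finset.range (n+1) ×ˢ perms n)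
    (f := F) (g := fun q => F (q.2.insertIdx q.1 n))
    (i := fun (l : List ℕ) => (l.idxOf n, l.erase n))
    (j := fun (q : ℕ × List ℕ) => q.2.insertIdx q.1 n) ?_ ?_ ?_ ?_ ?_
  · intro l hl
    simp only [Finset.mem_product, Finset.mem_range]
    exact ⟨by rw [← length_of_mem_perms hl]; exact List.idxOf_lt_length_iff.mpr (mem_self_perms hl),
      erase_mem_perms hl⟩
  · intro q hq
    simp only [Finset.mem_product, Finset.mem_range] at hq
    exact insertIdx_mem_perms hq.2 (Nat.lt_succ_iff.mp hq.1)
  · intro l hl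
    exact insertIdx_indexOf_erase l (mem_self_perms hl)
  · intro q hq
    simp only [Finset.mem_product, Finset.mem_range] at hq
    have hlen : q.2.length = n := length_of_mem_perms hq.2
    have hnm := not_mem_self_perms hq.2
    have h1 := indexOf_insertIdx (x := n) q.1 q.2 hnm (by rw [hlen]; exact Nat.lt_succ_iff.mp hq.1)
    have h2 := erase_insertIdx (x := n) q.1 q.2 hnm (by rw [hlen]; exact Nat.lt_succ_iff.mp hq.1)
    simp [h1, h2]
  · intro l hl
    simp only
    rw [insertIdx_indexOf_erase l (mem_self_perms hl)]





lemma perms_zero : perms 0 = {[]} := by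
  ext l; simp [mem_perms, List.perm_nil, Finset.mem_singleton]

lemma perms_one : perms 1 = {[0]} := by
  ext l
  rw [mem_perms]
  simp only [Finset.mem_singleton]
  constructor
  · intro h
    have : List.range 1 = [0] := rfl
    rw [this] at h
    exact List.perm_singleton.mp h
  · intro h; subst h; exact List.Perm.refl _

lemma wiP_insertIdx (w : ℝ) (n p : ℕ) {l : List ℕ} (hl : l ∈ perms (n+1)) (hp : p ≤ n+1) :
    wiP w (n+2) (l.insertIdx p (n+1))
      = ((if p = 0 ∨ p = n+1 then w else 1) / (2*w + n)) * wiP w (n+1) l := by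
  have hlen : l.length = n+1 := length_of_mem_perms hl
  have hnm : (n+1) ∉ l := not_mem_self_perms hl
  have hidx := indexOf_insertIdx (x := n+1) p l hnm (by omega)
  have hers := erase_insertIdx (x := n+1) p l hnm (by omega)
  have hlen2 : (l.insertIdx p (n+1)).length = n+2 := by
    rw [List.length_insertIdx_of_le_length (by omega), hlen]
  show ((if _ then w else 1) / _) * _ = _
  rw [hidx, hers, hlen2]
  norm_num

lemma wiP_nonneg {w : ℝ} (hw : 0 < w) : ∀ (n : ℕ) (l : List ℕ), 0 ≤ wiP w n l
  | 0, l => by unfold wiP; split <;> norm_num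
  | 1, l => by unfold wiP; split <;> norm_num
  | (n+2), l => by
      show 0 ≤ (_ / _) * wiP w (n+1) (l.erase (n+1))
      have h1 : (0:ℝ) < 2*w + n := by positivity
      have := wiP_nonneg hw (n+1) (l.erase (n+1))
      have h2 : (0:ℝ) ≤ (if l.idxOf (n + 1) = 0 ∨ l.idxOf (n + 1) = l.length - 1 then w else 1) := by
        split <;> norm_num; exact hw.le
      positivity

lemma weight_sum (w : ℝ) (n : ℕ) :
    ∑ p ∈ Finset.range (n+2), (if p = 0 ∨ p = n+1 then w else 1) = 2*w + n := by
  rw [Finset.sum_range_succ]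
  have h1 : ∀ p ∈ Finset.range (n+1), (if p = 0 ∨ p = n+1 then w else (1:ℝ))
      = 1 + (if p = 0 then w - 1 else 0) := by
    intro p hp
    simp only [Finset.mem_range] at hp
    by_cases h0 : p = 0
    · simp [h0]
    · have hne : ¬(p = 0 ∨ p = n+1) := by omega
      rw [if_neg hne, if_neg h0]; ring
  rw [Finset.sum_congr rfl h1, Finset.sum_add_distrib, Finset.sum_const,
    Finset.sum_ite_eq' (Finset.range (n+1)) 0 (fun _ => w - 1)]
  simp only [Finset.mem_range, Nat.succ_pos, if_true, Finset.card_range, nsmul_eq_mul, mul_one]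
  have : (if n + 1 = 0 ∨ True then w else (1:ℝ)) = w := by simp
  rw [this]
  push_cast
  ring

lemma sum_wiP {w : ℝ} (hw : 0 < w) : ∀ n : ℕ, ∑ l ∈ perms n, wiP w n l = 1
  | 0 => by rw [perms_zero]; simp [wiP]
  | 1 => by rw [perms_one]; simp [wiP]
  | (n+2) => by
      rw [sum_perms_succ (n+1) (wiP w (n+2))]
      have : ∀ p ∈ Finset.range (n+2), ∑ l ∈ perms (n+1), wiP w (n+2) (l.insertIdx p (n+1))
          = ((if p = 0 ∨ p = n+1 then w else 1) / (2*w + n)) := by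
        intro p hp
        simp only [Finset.mem_range] at hp
        rw [Finset.sum_congr rfl (fun l hl => wiP_insertIdx w n p hl (by omega)),
          ← Finset.mul_sum, sum_wiP hw (n+1), mul_one]
      rw [Finset.sum_congr rfl this]
      have hD : (2*w + (n:ℝ)) ≠ 0 := by positivity
      rw [← Finset.sum_div, weight_sum w n, div_self hD]





/-! ### getD facts for insertIdx -/

lemma getD_insertIdx_lt {l : List ℕ} {p q : ℕ} (x : ℕ) (hq : q < p) (hql : q < l.length) :
    (l.insertIdx p x).getD q 0 = l.getD q 0 := by
  have h1 : q < (l.insertIdx p x).length := by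
    rcases le_or_gt p l.length with h | h
    · rw [List.length_insertIdx_of_le_length h]; omega
    · rw [List.insertIdx_of_length_lt h]; exact hql
  rw [List.getD_eq_getElem _ _ h1, List.getD_eq_getElem _ _ hql]
  exact List.getElem_insertIdx_of_lt hq h1

lemma getD_insertIdx_self {l : List ℕ} {p : ℕ} (x : ℕ) (hp : p ≤ l.length) :
    (l.insertIdx p x).getD p 0 = x := by
  have h1 : p < (l.insertIdx p x).length := by
    rw [List.length_insertIdx_of_le_length hp]; omega
  rw [List.getD_eq_getElem _ _ h1]
  exact List.getElem_insertIdx_self h1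

lemma getD_insertIdx_gt {l : List ℕ} {p q : ℕ} (x : ℕ) (hq : p < q) (hql : q ≤ l.length) :
    (l.insertIdx p x).getD q 0 = l.getD (q-1) 0 := by
  have hp : p ≤ l.length := by omega
  have h1 : q < (l.insertIdx p x).length := by
    rw [List.length_insertIdx_of_le_length hp]; omega
  rw [List.getD_eq_getElem _ _ h1, List.getD_eq_getElem _ _ (show q - 1 < l.length by omega)]
  have hq' : q = p + (q - p - 1) + 1 := by omega
  have h2 : p + (q - p - 1) < l.length := by omega
  have := List.getElem_insertIdx_add_succ l x p (q - p - 1) h2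
  convert this using 2 <;> omega

lemma getD_eraseIdx_lt {s : List ℕ} {i k : ℕ} (hk : k < i) (hks : k < s.length - 1) :
    (s.eraseIdx i).getD k 0 = s.getD k 0 := by
  have h1 : k < (s.eraseIdx i).length := by
    rw [List.length_eraseIdx]; split <;> omega
  rw [List.getD_eq_getElem _ _ h1, List.getD_eq_getElem _ _ (by omega)]
  exact List.getElem_eraseIdx_of_lt h1 hk

lemma getD_eraseIdx_ge {s : List ℕ} {i k : ℕ} (hk : i ≤ k) (hks : k < s.length - 1) :
    (s.eraseIdx i).getD k 0 = s.getD (k+1) 0 := by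
  have h1 : k < (s.eraseIdx i).length := by
    rw [List.length_eraseIdx]; split <;> omega
  rw [List.getD_eq_getElem _ _ h1, List.getD_eq_getElem _ _ (by omega)]
  exact List.getElem_eraseIdx_of_ge h1 hk

/-! ### restrEq under insertIdx -/

lemma restrEq_insert_left {l s : List ℕ} {p o : ℕ} (x : ℕ)
    (hlen : o + s.length ≤ l.length + 1) (hp : p < o) :
    restrEq (l.insertIdx p x) o s ↔ restrEq l (o-1) s := by
  have key : ∀ i < s.length, (l.insertIdx p x).getD (o+i) 0 = l.getD ((o-1)+i) 0 := by
    intro i hi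
    rw [getD_insertIdx_gt x (by omega) (by omega)]
    congr 1; omega
  constructor <;> intro H i hi j hj
  · rw [← key i hi, ← key j hj]; exact H i hi j hj
  · rw [key i hi, key j hj]; exact H i hi j hj

lemma restrEq_insert_right {l s : List ℕ} {p o : ℕ} (x : ℕ)
    (hlen : o + s.length ≤ p) (hp : p ≤ l.length) :
    restrEq (l.insertIdx p x) o s ↔ restrEq l o s := by
  have key : ∀ i < s.length, (l.insertIdx p x).getD (o+i) 0 = l.getD (o+i) 0 := by
    intro i hi
    exact getD_insertIdx_lt x (by omega) (by omega)
  constructor <;> intro H i hi j hj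
  · rw [← key i hi, ← key j hj]; exact H i hi j hj
  · rw [key i hi, key j hj]; exact H i hi j hj

lemma getD_lt_of_lt {l : List ℕ} {q x : ℕ} (hq : q < l.length) (hx : ∀ y ∈ l, y < x) :
    l.getD q 0 < x := by
  rw [List.getD_eq_getElem _ _ hq]
  exact hx _ (l.getElem_mem hq)

lemma restrEq_insert_mid {l s : List ℕ} {o i x : ℕ} (hi : i < s.length)
    (hlen : o + s.length ≤ l.length + 1) (hx : ∀ y ∈ l, y < x) :
    restrEq (l.insertIdx (o+i) x) o s ↔
      ((∀ j < s.length, j ≠ i → s.getD j 0 < s.getD i 0) ∧ restrEq l o (s.eraseIdx i)) := by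
  set L := l.insertIdx (o+i) x with hL
  have hlt : ∀ j < s.length, j < i → L.getD (o+j) 0 = l.getD (o+j) 0 := by
    intro j hj hji; exact getD_insertIdx_lt x (by omega) (by omega)
  have hself : L.getD (o+i) 0 = x := getD_insertIdx_self x (by omega)
  have hgt : ∀ j < s.length, i < j → L.getD (o+j) 0 = l.getD (o+j-1) 0 := by
    intro j hj hji; exact getD_insertIdx_gt x (by omega) (by omega)
  have hLsmall : ∀ j < s.length, j ≠ i → L.getD (o+j) 0 < x := by
    intro j hj hji
    rcases Nat.lt_or_ge j i with h | h
    · rw [hlt j hj h]; exact getD_lt_of_lt (by omega) hx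
    · have h2 : i < j := by omega
      rw [hgt j hj h2]; exact getD_lt_of_lt (by omega) hx
  have herlen : (s.eraseIdx i).length = s.length - 1 := by
    rw [List.length_eraseIdx]; simp [hi]
  -- relating l-window entries to L-window entries
  have hrel : ∀ a < s.length - 1, l.getD (o+a) 0 = L.getD (o + (if a < i then a else a+1)) 0 := by
    intro a ha
    by_cases h : a < i
    · rw [if_pos h, hlt a (by omega) h]
    · have he : o + (a+1) - 1 = o + a := by omega
      rw [if_neg h, hgt (a+1) (by omega) (by omega), he]
  have hrel2 : ∀ a < s.length - 1, (s.eraseIdx i).getD a 0 = s.getD (if a < i then a else a+1) 0 := by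
    intro a ha
    by_cases h : a < i
    · rw [if_pos h, getD_eraseIdx_lt h ha]
    · rw [if_neg h, getD_eraseIdx_ge (by omega) ha]
  constructor
  · intro H
    refine ⟨fun j hj hji => ?_, ?_⟩
    · exact (H j hj i hi).mp (by rw [hself]; exact hLsmall j hj hji)
    · intro a ha b hb
      rw [herlen] at ha hb
      rw [hrel a ha, hrel b hb, hrel2 a ha, hrel2 b hb]
      exact H _ (by split <;> omega) _ (by split <;> omega)
  · rintro ⟨hmax, hrest⟩ j hj k hk
    by_cases hji : j = i
    · subst hji
      by_cases hki : k = j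
      · subst hki; simp
      · rw [hself]
        have h1 : ¬ x < L.getD (o+k) 0 := not_lt.mpr (hLsmall k hk hki).le
        have h2 : ¬ s.getD j 0 < s.getD k 0 := not_lt.mpr (hmax k hk hki).le
        exact iff_of_false h1 h2
    · by_cases hki : k = i
      · subst hki
        rw [hself]
        constructor
        · intro _; exact hmax j hj hji
        · intro _; exact hLsmall j hj hji
      · -- both differ from i
        set a := if j < i then j else j - 1 with hadef
        set b := if k < i then k else k - 1 with hbdef
        have haa : a < s.length - 1 := by rw [hadef]; split <;> omega
        have hbb : b < s.length - 1 := by rw [hbdef]; split <;> omega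
        have hja : j = (if a < i then a else a+1) := by
          rw [hadef]; rcases Nat.lt_or_ge j i with h | h
          · simp [h]
          · have : ¬ (j - 1 < i) := by omega
            simp [show ¬ j < i by omega, this]; omega
        have hkb : k = (if b < i then b else b+1) := by
          rw [hbdef]; rcases Nat.lt_or_ge k i with h | h
          · simp [h]
          · have : ¬ (k - 1 < i) := by omega
            simp [show ¬ k < i by omega, this]; omega
        have e1 : L.getD (o+j) 0 = l.getD (o+a) 0 := by rw [hrel a haa, ← hja]
        have e2 : L.getD (o+k) 0 = l.getD (o+b) 0 := by rw [hrel b hbb, ← hkb]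
        have e3 : s.getD j 0 = (s.eraseIdx i).getD a 0 := by rw [hrel2 a haa, ← hja]
        have e4 : s.getD k 0 = (s.eraseIdx i).getD b 0 := by rw [hrel2 b hbb, ← hkb]
        rw [e1, e2, e3, e4]
        exact hrest a (by omega) b (by omega)





noncomputable def Qf (w : ℝ) (N o : ℕ) (s : List ℕ) : ℝ :=
  ∑ l ∈ perms N, if restrEq l o s then wiP w N l else 0

lemma Qf_nonneg {w : ℝ} (hw : 0 < w) (N o : ℕ) (s : List ℕ) : 0 ≤ Qf w N o s := by
  refine Finset.sum_nonneg fun l _ => ?_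
  split
  · exact wiP_nonneg hw N l
  · exact le_refl 0

lemma Qf_le_one {w : ℝ} (hw : 0 < w) (N o : ℕ) (s : List ℕ) : Qf w N o s ≤ 1 := by
  rw [← sum_wiP hw N]
  refine Finset.sum_le_sum fun l _ => ?_
  split
  · exact le_refl _
  · exact wiP_nonneg hw N l

lemma Qf_nil {w : ℝ} (hw : 0 < w) (N o : ℕ) : Qf w N o [] = 1 := by
  rw [Qf, ← sum_wiP hw N]
  refine Finset.sum_congr rfl fun l _ => ?_
  rw [if_pos]
  intro i hi
  simp at hi

lemma Qf_rec (w : ℝ) (hw : 0 < w) (n o : ℕ) (s : List ℕ) {i : ℕ} (hi : i < s.length)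
    (hmax : ∀ j < s.length, j ≠ i → s.getD j 0 < s.getD i 0)
    (ho : 1 ≤ o) (hor : o + s.length + 1 ≤ n + 2) :
    Qf w (n+2) o s
      = ((w + o - 1) / (2*w+n)) * Qf w (n+1) (o-1) s
        + ((w + ((n+1-(o + s.length) : ℕ) : ℝ)) / (2*w+n)) * Qf w (n+1) o s
        + (1 / (2*w+n)) * Qf w (n+1) o (s.eraseIdx i) := by
  have hr1 : 1 ≤ s.length := by omega
  rw [Qf, sum_perms_succ (n+1) (fun l => if restrEq l o s then wiP w (n+2) l else 0)]
  have hsplit : ∀ p ∈ Finset.range (n+2),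
      (∑ l ∈ perms (n+1), if restrEq (l.insertIdx p (n+1)) o s
          then wiP w (n+2) (l.insertIdx p (n+1)) else 0)
      = ((if p = 0 ∨ p = n+1 then w else 1) / (2*w + n)) *
          (if p < o then Qf w (n+1) (o-1) s
           else if p < o + s.length then
             (if p = o + i then Qf w (n+1) o (s.eraseIdx i) else 0)
           else Qf w (n+1) o s) := by
    intro p hp
    simp only [Finset.mem_range] at hp
    have hbody : ∀ l ∈ perms (n+1),
        (if restrEq (l.insertIdx p (n+1)) o s then wiP w (n+2) (l.insertIdx p (n+1)) else 0)
        = ((if p = 0 ∨ p = n+1 then w else 1) / (2*w + n)) *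
            (if restrEq (l.insertIdx p (n+1)) o s then wiP w (n+1) l else 0) := by
      intro l hl
      rw [wiP_insertIdx w n p hl (by omega)]
      split <;> simp
    rw [Finset.sum_congr rfl hbody, ← Finset.mul_sum]
    congr 1
    rcases Nat.lt_or_ge p o with hpo | hpo
    · rw [if_pos hpo, Qf]
      refine Finset.sum_congr rfl fun l hl => ?_
      have hll : l.length = n+1 := length_of_mem_perms hl
      rw [restrEq_insert_left (n+1) (by omega) hpo]
    · rw [if_neg (by omega)]
      rcases Nat.lt_or_ge p (o + s.length) with hpr | hpr
      · rw [if_pos hpr]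
        have hpi : p = o + (p - o) := by omega
        have hio : p - o < s.length := by omega
        rcases eq_or_ne p (o+i) with hpe | hpe
        · rw [if_pos hpe, Qf]
          refine Finset.sum_congr rfl fun l hl => ?_
          have hll : l.length = n+1 := length_of_mem_perms hl
          have hxl : ∀ y ∈ l, y < n+1 := fun y hy => lt_of_mem_perms hl hy
          rw [hpe, restrEq_insert_mid hi (by omega) hxl, and_iff_right hmax]
        · rw [if_neg hpe]
          refine Finset.sum_eq_zero fun l hl => ?_
          have hll : l.length = n+1 := length_of_mem_perms hl
          have hxl : ∀ y ∈ l, y < n+1 := fun y hy => lt_of_mem_perms hl hy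
          rw [if_neg]
          rw [hpi, restrEq_insert_mid hio (by omega) hxl]
          rintro ⟨hm2, -⟩
          have h1 := hm2 i hi (by omega)
          have h2 := hmax (p-o) hio (by omega)
          omega
      · rw [if_neg (by omega), Qf]
        refine Finset.sum_congr rfl fun l hl => ?_
        have hll : l.length = n+1 := length_of_mem_perms hl
        rw [restrEq_insert_right (n+1) hpr (by omega)]
  rw [Finset.sum_congr rfl hsplit]
  set Q1 := Qf w (n+1) (o-1) s
  set Q2 := Qf w (n+1) o s
  set Q3 := Qf w (n+1) o (s.eraseIdx i)
  set D : ℝ := 2*w + n with hD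
  set wgt : ℕ → ℝ := fun p => if p = 0 ∨ p = n+1 then w else 1 with hwgt
  have h1 : Finset.range (n+2) = Finset.Ico 0 (n+2) := by
    rw [Finset.range_eq_Ico]
  rw [h1, ← Finset.sum_Ico_consecutive _ (Nat.zero_le o) (show o ≤ n+2 by omega),
    ← Finset.sum_Ico_consecutive _ (show o ≤ o + s.length by omega) (show o + s.length ≤ n+2 by omega)]
  have hS1 : ∑ p ∈ Finset.Ico 0 o, (wgt p / D) *
      (if p < o then Q1 else if p < o + s.length then (if p = o + i then Q3 else 0) else Q2)
      = ((w + o - 1) / D) * Q1 := by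
    have : ∀ p ∈ Finset.Ico 0 o, (wgt p / D) *
        (if p < o then Q1 else if p < o + s.length then (if p = o + i then Q3 else 0) else Q2)
        = ((1 + (if p = 0 then w - 1 else 0)) / D) * Q1 := by
      intro p hp
      simp only [Finset.mem_Ico] at hp
      rw [if_pos hp.2]
      congr 2
      rw [hwgt]
      simp only
      by_cases h0 : p = 0
      · have : p = 0 ∨ p = n+1 := Or.inl h0
        rw [if_pos this, if_pos h0]; ring
      · have : ¬(p = 0 ∨ p = n+1) := by omega
        rw [if_neg this, if_neg h0]; ring
    rw [Finset.sum_congr rfl this]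
    rw [← Finset.sum_mul, ← Finset.sum_div, Finset.sum_add_distrib, Finset.sum_const,
      Finset.sum_ite_eq' (Finset.Ico 0 o) 0 (fun _ => w - 1)]
    have h0mem : (0:ℕ) ∈ Finset.Ico 0 o := by simp; omega
    rw [if_pos h0mem, Nat.card_Ico]
    simp only [Nat.sub_zero, nsmul_eq_mul, mul_one]
    ring
  have hS2 : ∑ p ∈ Finset.Ico o (o + s.length), (wgt p / D) *
      (if p < o then Q1 else if p < o + s.length then (if p = o + i then Q3 else 0) else Q2)
      = (1 / D) * Q3 := by
    rw [Finset.sum_eq_single_of_mem (o+i) (by simp only [Finset.mem_Ico]; omega)]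
    · have hne0 : ¬(o + i = 0 ∨ o + i = n+1) := by omega
      rw [hwgt]
      simp only
      rw [if_neg hne0, if_neg (show ¬ o + i < o by omega), if_pos (show o + i < o + s.length by omega)]
      norm_num
    · intro p hp hne
      simp only [Finset.mem_Ico] at hp
      rw [if_neg (show ¬ p < o by omega), if_pos hp.2, if_neg hne, mul_zero]
  have hS3 : ∑ p ∈ Finset.Ico (o + s.length) (n+2), (wgt p / D) *
      (if p < o then Q1 else if p < o + s.length then (if p = o + i then Q3 else 0) else Q2)
      = ((w + ((n+1-(o + s.length) : ℕ) : ℝ)) / D) * Q2 := by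
    have hmem : ∀ p ∈ Finset.Ico (o + s.length) (n+2), (wgt p / D) *
        (if p < o then Q1 else if p < o + s.length then (if p = o + i then Q3 else 0) else Q2)
        = (wgt p / D) * Q2 := by
      intro p hp
      simp only [Finset.mem_Ico] at hp
      rw [if_neg (show ¬ p < o by omega), if_neg (show ¬ p < o + s.length by omega)]
    rw [Finset.sum_congr rfl hmem, ← Finset.sum_mul, ← Finset.sum_div]
    have htop : o + s.length ≤ n+1 := by omega
    rw [Finset.sum_Ico_succ_top htop]
    have hwtop : wgt (n+1) = w := by rw [hwgt]; simp
    have hrest : ∀ p ∈ Finset.Ico (o + s.length) (n+1), wgt p = 1 := by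
      intro p hp
      simp only [Finset.mem_Ico] at hp
      rw [hwgt]
      simp only
      rw [if_neg (by omega)]
    rw [Finset.sum_congr rfl hrest, Finset.sum_const, Nat.card_Ico, hwtop]
    simp only [nsmul_eq_mul, mul_one]
    ring
  rw [hS1, hS2, hS3]
  ring





/-- the supersolution -/
noncomputable def psi (w : ℝ) (L x : ℕ) : ℝ := if x ≤ L then 1 else (L+w)/(x+w)

lemma psi_nonneg {w : ℝ} (hw : 0 < w) (L x : ℕ) : 0 ≤ psi w L x := by
  rw [psi]; split
  · norm_num
  · positivity

lemma psi_le_one {w : ℝ} (hw : 0 < w) (L x : ℕ) : psi w L x ≤ 1 := by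
  rw [psi]; split
  · norm_num
  · rw [div_le_one (by positivity)]
    have : (L:ℝ) ≤ x := by exact_mod_cast Nat.le_of_lt (by omega)
    linarith

lemma psi_boundary {w : ℝ} (L x : ℕ) (h : x ≤ L) : psi w L x = 1 := if_pos h

lemma psi_key {w : ℝ} (hw : 0 < w) {L x : ℕ} (h : L + 1 ≤ x) :
    (w + x - 1) * psi w L (x-1) = (w + x - 1) * psi w L x + psi w L x := by
  have hx1 : (1:ℝ) ≤ x := by exact_mod_cast Nat.one_le_iff_ne_zero.mpr (by omega)
  have hpsix : psi w L x = (L+w)/(x+w) := if_neg (by omega)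
  have hxw : (0:ℝ) < x + w := by positivity
  rcases Nat.lt_or_ge L (x-1) with hc | hc
  · -- x - 1 ≥ L + 1
    have hpsix1 : psi w L (x-1) = (L+w)/((x-1:ℕ)+w) := if_neg (by omega)
    have hcast : ((x-1:ℕ):ℝ) = (x:ℝ) - 1 := by
      push_cast [Nat.cast_sub (show 1 ≤ x by omega)]; ring
    rw [hpsix1, hpsix, hcast]
    have hxw1 : (0:ℝ) < (x:ℝ) - 1 + w := by
      have : (2:ℝ) ≤ x := by exact_mod_cast (show 2 ≤ x by omega)
      linarith
    field_simp
    ring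
  · -- x - 1 ≤ L, so x = L + 1
    have hxL : x = L + 1 := by omega
    have hpsix1 : psi w L (x-1) = 1 := psi_boundary L (x-1) (by omega)
    rw [hpsix1, hpsix, hxL]
    push_cast
    have h1 : (0:ℝ) < (L:ℝ) + 1 + w := by positivity
    field_simp
    ring

lemma abs_sub_le_one_of_mem {a b : ℝ} (ha0 : 0 ≤ a) (ha1 : a ≤ 1) (hb0 : 0 ≤ b) (hb1 : b ≤ 1) :
    |a - b| ≤ 1 := by
  rw [abs_le]; constructor <;> linarith

lemma one_div_factorial_mem (r : ℕ) : 0 < (1:ℝ)/(r.factorial : ℝ) ∧ (1:ℝ)/(r.factorial:ℝ) ≤ 1 := by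
  have h1 : (0:ℝ) < (r.factorial : ℝ) := by exact_mod_cast r.factorial_pos
  have h2 : (1:ℝ) ≤ (r.factorial : ℝ) := by exact_mod_cast r.factorial_pos
  constructor
  · positivity
  · rw [div_le_one h1]; exact h2

lemma exists_max_idx {s : List ℕ} (hs : s.Nodup) (h1 : 1 ≤ s.length) :
    ∃ i < s.length, ∀ j < s.length, j ≠ i → s.getD j 0 < s.getD i 0 := by
  obtain ⟨i, hi, hmax⟩ := Finset.exists_max_image (Finset.range s.length)
    (fun j => s.getD j 0) ⟨0, Finset.mem_range.mpr (by omega)⟩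
  rw [Finset.mem_range] at hi
  refine ⟨i, hi, fun j hj hne => ?_⟩
  have hle := hmax j (Finset.mem_range.mpr hj)
  rcases lt_or_eq_of_le hle with h | h
  · exact h
  · exfalso
    apply hne
    have e1 : s.getD j 0 = s[j]'hj := List.getD_eq_getElem s 0 hj
    have e2 : s.getD i 0 = s[i]'hi := List.getD_eq_getElem s 0 hi
    rw [e1, e2] at h
    exact (List.Nodup.getElem_inj_iff hs).mp h

/-- Inner bound: one level of the induction. -/
lemma inner_bound {w : ℝ} (hw : 0 < w) (r L : ℕ) (hL : 1 ≤ L) (ε : ℝ) (hε : 0 ≤ ε)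
    (IH : ∀ N o (t : List ℕ), t.Nodup → t.length = r → L ≤ o → o + r + L ≤ N →
        |Qf w N o t - 1/(r.factorial : ℝ)| ≤ ε) :
    ∀ N o (s : List ℕ), s.Nodup → s.length = r+1 → 1 ≤ o → o + (r+1) + 1 ≤ N →
      |Qf w N o s - 1/(((r+1).factorial : ℝ))|
        ≤ psi w L o + psi w L (N - o - (r+1)) + ε := by
  intro N
  induction N using Nat.strong_induction_on with
  | _ N ihN =>
  intro o s hnd hlen ho hN
  have hfac := one_div_factorial_mem (r+1)
  by_cases hbdy : o ≤ L ∨ N - o - (r+1) ≤ L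
  · -- boundary: crude bound by 1
    have h1 : |Qf w N o s - 1/(((r+1).factorial : ℝ))| ≤ 1 :=
      abs_sub_le_one_of_mem (Qf_nonneg hw _ _ _) (Qf_le_one hw _ _ _) hfac.1.le hfac.2
    rcases hbdy with h | h
    · have := psi_boundary (w := w) L o h
      have h2 := psi_nonneg hw L (N - o - (r+1))
      linarith
    · have := psi_boundary (w := w) L (N - o - (r+1)) h
      have h2 := psi_nonneg hw L o
      linarith
  · push_neg at hbdy
    obtain ⟨hoL, hdL⟩ := hbdy
    set dR := N - o - (r+1) with hdR
    have hoL' : L + 1 ≤ o := hoL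
    have hdL' : L + 1 ≤ dR := hdL
    obtain ⟨n, rfl⟩ : ∃ n, N = n + 2 := ⟨N - 2, by omega⟩
    obtain ⟨i, hi, hmax⟩ := exists_max_idx hnd (by omega)
    have hrec := Qf_rec w hw n o s hi hmax ho (by omega)
    set D : ℝ := 2*w + n with hDdef
    have hD0 : (0:ℝ) < D := by positivity
    set a : ℝ := w + o - 1 with hadef
    have ha0 : 0 ≤ a := by
      have : (1:ℝ) ≤ o := by exact_mod_cast ho
      rw [hadef]; linarith
    have hcoefb : ((n+1-(o + s.length) : ℕ) : ℝ) = ((dR - 1 : ℕ) : ℝ) := by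
      congr 1
      omega
    set b : ℝ := w + ((dR - 1 : ℕ) : ℝ) with hbdef
    have hb0 : 0 ≤ b := by
      have : (0:ℝ) ≤ ((dR - 1 : ℕ) : ℝ) := Nat.cast_nonneg _
      rw [hbdef]; linarith
    have hbcast : ((dR - 1 : ℕ) : ℝ) = (dR:ℝ) - 1 := by
      have : 1 ≤ dR := by omega
      push_cast [Nat.cast_sub this]; ring
    have hDsum : D = a + b + (r+1) := by
      rw [hDdef, hadef, hbdef, hbcast]
      have hn : (n:ℝ) + 1 = (o:ℝ) + (dR:ℝ) + r := by
        have : n + 1 = o + dR + r := by omega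
        exact_mod_cast congrArg (Nat.cast : ℕ → ℝ) this
      linarith [hn]
    -- the three children bounds
    have hu1 : |Qf w (n+1) (o-1) s - 1/(((r+1).factorial : ℝ))|
        ≤ psi w L (o-1) + psi w L dR + ε := by
      have := ihN (n+1) (by omega) (o-1) s hnd hlen (by omega) (by omega)
      have harg : (n+1) - (o-1) - (r+1) = dR := by omega
      rwa [harg] at this
    have hu2 : |Qf w (n+1) o s - 1/(((r+1).factorial : ℝ))|
        ≤ psi w L o + psi w L (dR-1) + ε := by
      have := ihN (n+1) (by omega) o s hnd hlen ho (by omega)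
      have harg : (n+1) - o - (r+1) = dR - 1 := by omega
      rwa [harg] at this
    have hv : |Qf w (n+1) o (s.eraseIdx i) - 1/((r.factorial : ℝ))| ≤ ε := by
      refine IH (n+1) o (s.eraseIdx i) (hnd.eraseIdx i) ?_ (by omega) (by omega)
      rw [List.length_eraseIdx, if_pos hi, hlen]
      omega
    -- decomposition identity
    have hfact : ((r+1).factorial : ℝ) = (r+1) * (r.factorial : ℝ) := by
      rw [Nat.factorial_succ]; push_cast; ring
    have hfac0 : (0:ℝ) < (r.factorial : ℝ) := by exact_mod_cast r.factorial_pos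
    set c : ℝ := 1/(((r+1).factorial : ℝ)) with hcdef
    set c' : ℝ := 1/((r.factorial : ℝ)) with hc'def
    have hc' : c' = ((r:ℝ)+1)*c := by
      rw [hcdef, hc'def, hfact]
      have h1 : ((r:ℝ)+1) ≠ 0 := by positivity
      field_simp
    have hcc : a/D*c + b/D*c + 1/D*c' = c := by
      rw [hc']
      have h2 : a/D*c + b/D*c + 1/D*(((r:ℝ)+1)*c) = (a + b + ((r:ℝ)+1))/D * c := by ring
      rw [h2, ← hDsum, div_self hD0.ne', one_mul]
    have hkey : Qf w (n+2) o s - c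
        = (a/D) * (Qf w (n+1) (o-1) s - c)
          + (b/D) * (Qf w (n+1) o s - c)
          + (1/D) * (Qf w (n+1) o (s.eraseIdx i) - c') := by
      rw [hrec, hcoefb]
      linear_combination hcc
    -- psi key inequalities
    have hpko : a * psi w L (o-1) = a * psi w L o + psi w L o := by
      rw [hadef]; exact psi_key hw hoL'
    have hpkd : b * psi w L (dR-1) = b * psi w L dR + psi w L dR := by
      rw [hbdef, hbcast]; linear_combination psi_key hw hdL'
    -- triangle inequality
    have hA : 0 ≤ a/D := by positivity
    have hB : 0 ≤ b/D := by positivity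
    have hC : (0:ℝ) ≤ 1/D := by positivity
    have htri : |Qf w (n+2) o s - c|
        ≤ (a/D) * (psi w L (o-1) + psi w L dR + ε)
          + (b/D) * (psi w L o + psi w L (dR-1) + ε)
          + (1/D) * ε := by
      rw [hkey]
      refine le_trans (abs_add_le _ _) ?_
      refine add_le_add (le_trans (abs_add_le _ _) ?_) ?_
      · refine add_le_add ?_ ?_
        · rw [abs_mul, abs_of_nonneg hA]
          exact mul_le_mul_of_nonneg_left hu1 hA
        · rw [abs_mul, abs_of_nonneg hB]
          exact mul_le_mul_of_nonneg_left hu2 hB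
      · rw [abs_mul, abs_of_nonneg hC]
        exact mul_le_mul_of_nonneg_left hv hC
    refine le_trans htri ?_
    have hS : 0 ≤ psi w L o + psi w L dR + ε := by
      have := psi_nonneg hw L o; have := psi_nonneg hw L dR; linarith
    have hr0 : (0:ℝ) ≤ (r:ℝ) := Nat.cast_nonneg r
    have hre : a/D * (psi w L (o-1) + psi w L dR + ε)
        + b/D * (psi w L o + psi w L (dR-1) + ε) + 1/D * ε
        = (a * (psi w L (o-1) + psi w L dR + ε)
            + b * (psi w L o + psi w L (dR-1) + ε) + ε)/D := by ring
    rw [hre, div_le_iff₀ hD0]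
    have hexp : a * (psi w L (o-1) + psi w L dR + ε)
        + b * (psi w L o + psi w L (dR-1) + ε) + ε
        = (a + b + 1) * (psi w L o + psi w L dR + ε) := by
      linear_combination hpko + hpkd
    rw [hexp, hDsum]
    have hab : a + b + 1 ≤ a + b + ((r:ℝ)+1) := by linarith
    calc (a + b + 1) * (psi w L o + psi w L dR + ε)
        = (psi w L o + psi w L dR + ε) * (a + b + 1) := by ring
      _ ≤ (psi w L o + psi w L dR + ε) * (a + b + ((r:ℝ)+1)) :=
          mul_le_mul_of_nonneg_left hab hS








lemma psi_small {w : ℝ} (hw : 0 < w) {ε : ℝ} (hε : 0 < ε) (L' L x : ℕ)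
    (hLL : L' + 1 ≤ L) (hLε : 4*((L':ℝ)+w) ≤ ε * L) (hx : L ≤ x) :
    psi w L' x ≤ ε/4 := by
  have hp : psi w L' x = ((L':ℝ)+w)/((x:ℝ)+w) := if_neg (by omega)
  rw [hp]
  have hL0 : (0:ℝ) < L := by
    have : (1:ℕ) ≤ L := by omega
    exact_mod_cast Nat.lt_of_lt_of_le Nat.zero_lt_one this
  have hxL : (L:ℝ) ≤ (x:ℝ) := by exact_mod_cast hx
  have hxw : (0:ℝ) < (x:ℝ) + w := by positivity
  rw [div_le_iff₀ hxw]
  have h1 : ((L':ℝ)+w) ≤ ε/4 * L := by linarith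
  have h2 : ε/4 * (L:ℝ) ≤ ε/4 * ((x:ℝ)+w) := by
    apply mul_le_mul_of_nonneg_left _ (by linarith)
    linarith
  linarith

lemma conv {w : ℝ} (hw : 0 < w) : ∀ (r : ℕ) (ε : ℝ), 0 < ε → ∃ L : ℕ, 1 ≤ L ∧
    ∀ N o (t : List ℕ), t.Nodup → t.length = r → L ≤ o → o + r + L ≤ N →
      |Qf w N o t - 1/(r.factorial : ℝ)| ≤ ε := by
  intro r
  induction r with
  | zero =>
      intro ε hε
      refine ⟨1, le_refl 1, fun N o t _ hlen _ _ => ?_⟩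
      have ht : t = [] := List.eq_nil_of_length_eq_zero hlen
      subst ht
      rw [Qf_nil hw]
      simp [Nat.factorial]
      linarith
  | succ r ih =>
      intro ε hε
      obtain ⟨L', hL', hIH⟩ := ih (ε/2) (by linarith)
      set L : ℕ := max (L'+1) ⌈(4*((L':ℝ)+w))/ε⌉₊ with hLdef
      have hLL : L' + 1 ≤ L := le_max_left _ _
      have hLε : 4*((L':ℝ)+w) ≤ ε * L := by
        have h1 : (⌈(4*((L':ℝ)+w))/ε⌉₊ : ℝ) ≥ (4*((L':ℝ)+w))/ε := Nat.le_ceil _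
        have h2 : ((⌈(4*((L':ℝ)+w))/ε⌉₊ : ℕ) : ℝ) ≤ (L:ℝ) := by
          exact_mod_cast le_max_right (L'+1) _
        have h3 : (4*((L':ℝ)+w))/ε ≤ (L:ℝ) := by linarith
        calc 4*((L':ℝ)+w) = ε * ((4*((L':ℝ)+w))/ε) := by field_simp
          _ ≤ ε * L := by apply mul_le_mul_of_nonneg_left h3 hε.le
      refine ⟨L, by omega, fun N o t hnd hlen hLo hLN => ?_⟩
      have hb := inner_bound hw r L' hL' (ε/2) (by linarith) hIH N o t hnd hlen
        (by omega) (by omega)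
      have hp1 : psi w L' o ≤ ε/4 := psi_small hw hε L' L o hLL hLε hLo
      have hp2 : psi w L' (N - o - (r+1)) ≤ ε/4 :=
        psi_small hw hε L' L _ hLL hLε (by omega)
      linarith

theorem restriction_tends_to_uniform' (w : ℝ) (hw : 0 < w) (m : ℕ) (hm : 1 ≤ m) :
    Filter.Tendsto
      (fun n : ℕ => ∑ s ∈ perms (2 * m + 1),
        |(∑ l ∈ perms (2 * n + 1), if restrEq l (n - m) s then wiP w (2 * n + 1) l else 0)
          - 1 / (Nat.factorial (2 * m + 1) : ℝ)|)
      Filter.atTop (nhds 0) := by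
  rw [Metric.tendsto_atTop]
  intro ε hε
  set K : ℕ := (perms (2*m+1)).card with hK
  have hK0 : 0 < K := by
    rw [hK, perms]
    refine Finset.card_pos.mpr ⟨List.range (2*m+1), ?_⟩
    rw [List.mem_toFinset]
    exact List.mem_permutations.mpr (List.Perm.refl _)
  set ε' : ℝ := ε/(2*K) with hε'
  have hε'0 : 0 < ε' := by
    rw [hε']
    have : (0:ℝ) < K := by exact_mod_cast hK0
    positivity
  obtain ⟨L, hL1, hconv⟩ := conv hw (2*m+1) ε' hε'0
  refine ⟨m + L, fun n hn => ?_⟩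
  have hbound : ∀ s ∈ perms (2*m+1),
      |(∑ l ∈ perms (2 * n + 1), if restrEq l (n - m) s then wiP w (2 * n + 1) l else 0)
          - 1 / (Nat.factorial (2 * m + 1) : ℝ)| ≤ ε' := by
    intro s hs
    have hnd : s.Nodup := (mem_perms.mp hs).symm.nodup List.nodup_range
    have hlen : s.length = 2*m+1 := by simpa using (mem_perms.mp hs).length_eq
    have h1 : L ≤ n - m := by omega
    have h2 : (n-m) + (2*m+1) + L ≤ 2*n+1 := by omega
    have := hconv (2*n+1) (n-m) s hnd hlen h1 h2
    rw [Qf] at this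
    convert this using 3
  have hsum : (∑ s ∈ perms (2 * m + 1),
      |(∑ l ∈ perms (2 * n + 1), if restrEq l (n - m) s then wiP w (2 * n + 1) l else 0)
          - 1 / (Nat.factorial (2 * m + 1) : ℝ)|) ≤ K * ε' := by
    calc _ ≤ ∑ _s ∈ perms (2*m+1), ε' := Finset.sum_le_sum hbound
      _ = K * ε' := by rw [Finset.sum_const, hK, nsmul_eq_mul]
  have hKε : (K:ℝ) * ε' = ε/2 := by
    rw [hε']
    have : (K:ℝ) ≠ 0 := by exact_mod_cast hK0.ne'
    field_simp
  rw [Real.dist_eq, sub_zero]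
  have hnonneg : (0:ℝ) ≤ ∑ s ∈ perms (2 * m + 1),
      |(∑ l ∈ perms (2 * n + 1), if restrEq l (n - m) s then wiP w (2 * n + 1) l else 0)
          - 1 / (Nat.factorial (2 * m + 1) : ℝ)| :=
    Finset.sum_nonneg fun s _ => abs_nonneg _
  rw [abs_of_nonneg hnonneg]
  calc _ ≤ (K:ℝ) * ε' := hsum
    _ = ε/2 := hKε
    _ < ε := by linarith


end WIhelp

/-- the restriction to `[-m,m]` of the weighted-insertion order
with weight `w` on `[-n,n]` (encoded on positions `0,…,2n`, position `i+n`
standing for `i`) converges in total variation, as `n → ∞`, to a uniformly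
random total order on `[-m,m]`. -/
theorem restriction_tends_to_uniform (w : ℝ) (hw : 0 < w) (m : ℕ) (hm : 1 ≤ m) :
    Filter.Tendsto
      (fun n : ℕ => ∑ s ∈ perms (2 * m + 1),
        |(∑ l ∈ perms (2 * n + 1), if restrEq l (n - m) s then wiP w (2 * n + 1) l else 0)
          - 1 / (Nat.factorial (2 * m + 1) : ℝ)|)
      Filter.atTop (nhds 0) := by
  exact WIhelp.restriction_tends_to_uniform' w hw m hm
end
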